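/- arXiv:1109.6702 — 2 statements merged into one kernel-verified Lean document; each statement's English description precedes it below -/
import Mathlib

section
/- Let λ be a k-strict partition of length ℓ, let p be any integer, and let Ψ = ∏_{j=2}^{ℓ+1} (1−R_{1j})/(1+R_{1j}). Suppose that ∑_ν a_ν w_ν = ∑_ν b_ν w_ν holds in the ring C^{(k)}, where the sums are over integer vectors ν = (ν_1,…,ν_ℓ) and a_ν, b_ν are integers only finitely many of which are nonzero. Then ∑_ν a_ν Ψ w_{(p,ν)} = ∑_ν b_ν Ψ w_{(p,ν)} holds in C^{(k)}. -/
noncomputable section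
open scoped Classical

namespace EtaP

/-! ### Raising operator formalism.
An integer sequence is `α : ℕ → ℤ` (0-indexed; the paper's `α_i` is `α (i-1)`).
A raising-operator monomial is `n : (ℕ × ℕ) →₀ ℕ`, where `n (i,j)` is the exponent of
`R_{i+1,j+1}`.  `net n m` is the total change of the `m`-th entry. -/

def net (n : (ℕ × ℕ) →₀ ℕ) (m : ℕ) : ℤ :=
  (∑ᶠ j : ℕ, (n (m, j) : ℤ)) - ∑ᶠ i : ℕ, (n (i, m) : ℤ)

/-- The coefficient of the raising-operator monomial `n` in the formal power series
`∏_{p ∈ Dfull} (1-R_p)(1+R_p)⁻¹ · ∏_{p ∈ Done} (1-R_p)`. -/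
def rcoeff (Dfull Done : Set (ℕ × ℕ)) (n : (ℕ × ℕ) →₀ ℕ) : ℤ :=
  ∏ᶠ p : ℕ × ℕ,
    if p ∈ Dfull then (if n p = 0 then 1 else 2 * (-1 : ℤ) ^ (n p))
    else if p ∈ Done then (if n p = 0 then 1 else if n p = 1 then -1 else 0)
    else (if n p = 0 then 1 else 0)

/-- Apply the raising operator series determined by `Dfull`, `Done` to the
monomial `f_α = ∏_m f (α m)`, where `f : ℤ → R` satisfies `f 0 = 1`, `f r = 0` for `r < 0`. -/
def RApply {R : Type} [CommRing R] (Dfull Done : Set (ℕ × ℕ)) (f : ℤ → R) (α : ℕ → ℤ) : R :=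
  ∑ᶠ n : (ℕ × ℕ) →₀ ℕ, rcoeff Dfull Done n • ∏ᶠ m : ℕ, f (α m + net n m)

/-- The set of all pairs `i < j` (upper triangle). -/
def UT : Set (ℕ × ℕ) := {p | p.1 < p.2}

/-! ### Partitions.
A partition is a finitely supported antitone `ℕ →₀ ℕ`; `μ i` is the part `μ_{i+1}`. -/

/-- `|μ|`, the sum of the parts. -/
def sz (μ : ℕ →₀ ℕ) : ℕ := μ.sum fun _ v => v

/-- `ℓ(μ)`, the number of nonzero parts. -/
def plen (μ : ℕ →₀ ℕ) : ℕ := μ.support.card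

/-- `ℓ_k(μ)`, the number of parts `> k`. -/
def lenk (k : ℕ) (μ : ℕ →₀ ℕ) : ℕ := (μ.support.filter fun i => k < μ i).card

/-- the number of boxes of `μ` in column `c` (for `c ≥ 1`). -/
def colHt (μ : ℕ →₀ ℕ) (c : ℕ) : ℕ := (μ.support.filter fun i => c ≤ μ i).card

/-- `μ` has positive type: some part equals `k`. -/
def posType (k : ℕ) (μ : ℕ →₀ ℕ) : Prop := ∃ i, μ i = k

def IsPartn (ν : ℕ →₀ ℕ) : Prop := ∀ i j, i ≤ j → ν j ≤ ν i

/-- A `k`-strict partition: parts greater than `k` are distinct. -/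
structure KStrict (k : ℕ) where
  p : ℕ →₀ ℕ
  mono : ∀ i j, i ≤ j → p j ≤ p i
  strict : ∀ i, p i = p (i + 1) → p i ≤ k

/-- A typed `k`-strict partition. -/
structure TypedKS (k : ℕ) where
  p : ℕ →₀ ℕ
  mono : ∀ i j, i ≤ j → p j ≤ p i
  strict : ∀ i, p i = p (i + 1) → p i ≤ k
  t : ℕ
  t_le : t ≤ 2
  t_pos : t ≠ 0 ↔ ∃ i, p i = k

/-! ### Young diagrams.  A box is a pair `(row, column)`, with rows and columns 1-indexed. -/

/-- `b` is a box of the Young diagram of `μ`. -/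
def InDiag (μ : ℕ →₀ ℕ) (b : ℕ × ℕ) : Prop := 1 ≤ b.1 ∧ 1 ≤ b.2 ∧ b.2 ≤ μ (b.1 - 1)

/-- `b` is a box of the Young diagram of `μ`, with the convention that all boxes
`[0,c]` in row zero are included. -/
def InDiag0 (μ : ℕ →₀ ℕ) (b : ℕ × ℕ) : Prop := 1 ≤ b.2 ∧ (b.1 = 0 ∨ InDiag μ b)

/-- The boxes of `lam` that are not boxes of `mu`. -/
def SkewBox (lam mu : ℕ →₀ ℕ) : Set (ℕ × ℕ) := {b | InDiag lam b ∧ ¬ InDiag mu b}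

/-- `b`, `b'` are `k'`-related: `b = [r,c]`, `b' = [r',c']` with `c ≤ k < c'` and
`c + c' = 2k + 1 + r - r'`. -/
def KRel (k : ℕ) (b b' : ℕ × ℕ) : Prop :=
  b.2 ≤ k ∧ k < b'.2 ∧ b.2 + b'.2 + b'.1 = 2 * k + 1 + b.1

/-- `b`, `b'` are `k''`-related: `|c-k| + r = |c'-k| + r'`. -/
def KppRel (k : ℕ) (b b' : ℕ × ℕ) : Prop :=
  ((b.2 : ℤ) - k).natAbs + b.1 = ((b'.2 : ℤ) - k).natAbs + b'.1

/-- Two boxes are adjacent when they share at least a vertex. -/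
def AdjBox (b b' : ℕ × ℕ) : Prop :=
  b.1 ≤ b'.1 + 1 ∧ b'.1 ≤ b.1 + 1 ∧ b.2 ≤ b'.2 + 1 ∧ b'.2 ≤ b.2 + 1

/-- The number of connected components of a set of boxes (boxes are connected when they
share at least a vertex). -/
def ncomp (S : Set (ℕ × ℕ)) : ℕ := Nat.card (Quot fun a b : S => AdjBox a.1 b.1)

/-! ### The Pieri relation `λ → μ` and `k'`-horizontal strips. -/

/-- The relation `λ → μ`:  `μ` is obtained from `λ` by removing a vertical strip from the
first `k` columns and adding a horizontal strip to the result, subject to the conditions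
(1) and (2) on `k'`-related boxes. -/
def Arrow (k : ℕ) (lam mu : ℕ →₀ ℕ) : Prop :=
  (∃ ν : ℕ →₀ ℕ, IsPartn ν ∧
    (∀ i, ν i ≤ lam i) ∧ (∀ i, lam i ≤ ν i + 1) ∧ (∀ i, ν i < lam i → lam i ≤ k) ∧
    (∀ i, ν i ≤ mu i) ∧ (∀ i, mu (i + 1) ≤ ν i)) ∧
  (∀ c, 1 ≤ c → c ≤ k →
    (colHt mu c = colHt lam c →
      ∀ b b', b ∈ SkewBox mu lam → b' ∈ SkewBox mu lam →
        KRel k (colHt lam c, c) b → KRel k (colHt lam c, c) b' → b = b') ∧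
    (colHt mu c < colHt lam c →
      ∃ R, ∀ r, colHt mu c ≤ r → r ≤ colHt lam c →
        (∃! b, b ∈ SkewBox mu lam ∧ KRel k (r, c) b) ∧
        (∀ b ∈ SkewBox mu lam, KRel k (r, c) b → b.1 = R)))

/-- A box of `μ ∖ λ` is mentioned in conditions (1), (2) of the Pieri relation. -/
def Mentioned (k : ℕ) (lam mu : ℕ →₀ ℕ) (b : ℕ × ℕ) : Prop :=
  ∃ c, 1 ≤ c ∧ c ≤ k ∧ ∃ r, colHt mu c ≤ r ∧ r ≤ colHt lam c ∧ KRel k (r, c) b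

/-- The set `A` of boxes of `μ ∖ λ` in columns `> k` not mentioned in (1) or (2). -/
def APieri (k : ℕ) (lam mu : ℕ →₀ ℕ) : Set (ℕ × ℕ) :=
  {b | b ∈ SkewBox mu lam ∧ k < b.2 ∧ ¬ Mentioned k lam mu b}

def NPieri (k : ℕ) (lam mu : ℕ →₀ ℕ) : ℕ := ncomp (APieri k lam mu)

def MPieri (k : ℕ) (lam mu : ℕ →₀ ℕ) : ℤ :=
  (lenk k lam : ℤ) - lenk k mu + NPieri k lam mu +
    (if posType k lam ∧ ¬ posType k mu then 1 else 0)

/-- `(a, μ)`: prepend the part `a` to `μ`. -/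
def prepend (a : ℕ) (mu : ℕ →₀ ℕ) : ℕ →₀ ℕ :=
  Finsupp.single 0 a + mu.embDomain ⟨Nat.succ, Nat.succ_injective⟩

def stripBound (k : ℕ) (lam : ℕ →₀ ℕ) : ℕ := max (lam 0 + 1) (plen lam + 2 * k - 1)

/-- `μ ⇒ λ` : `λ/μ` is a `k'`-horizontal strip. -/
def HStrip (k : ℕ) (mu lam : ℕ →₀ ℕ) : Prop :=
  (∀ i, mu i ≤ lam i) ∧
  ∀ q, stripBound k lam ≤ q → Arrow k lam (prepend (q + (sz lam - sz mu)) mu)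

/-- `m(λ/μ) := M(λ, (p + r, μ))`. -/
def mstrip (k : ℕ) (mu lam : ℕ →₀ ℕ) : ℤ :=
  MPieri k lam (prepend (stripBound k lam + (sz lam - sz mu)) mu)

/-- `n̂(λ/μ) = ℓ_k(μ) - ℓ_k(λ) + m(λ/μ)`. -/
def hatn (k : ℕ) (mu lam : ℕ →₀ ℕ) : ℤ :=
  (lenk k mu : ℤ) - lenk k lam + mstrip k mu lam

/-! ### The sets `R` and `A` attached to a `k'`-horizontal strip `λ/μ`. -/

/-- Left boxes (columns `≤ k`) of `λ/μ`. -/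
def LeftSkew (k : ℕ) (lam mu : ℕ →₀ ℕ) : Set (ℕ × ℕ) := {b | b ∈ SkewBox lam mu ∧ b.2 ≤ k}

/-- The set `R`: right boxes of `μ` (including row zero) which are bottom boxes of `λ` in
their column and are `k''`-related to a left box of `λ/μ`. -/
def RsetD (k : ℕ) (lam mu : ℕ →₀ ℕ) : Set (ℕ × ℕ) :=
  {b | k < b.2 ∧ InDiag0 mu b ∧ b.1 = colHt lam b.2 ∧ ∃ b' ∈ LeftSkew k lam mu, KppRel k b b'}

/-- The set `A`: right boxes of `μ` (including row zero) which are bottom boxes of `λ` in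
their column and are not `k''`-related to a left box of `λ/μ`. -/
def AsetD (k : ℕ) (lam mu : ℕ →₀ ℕ) : Set (ℕ × ℕ) :=
  {b | k < b.2 ∧ InDiag0 mu b ∧ b.1 = colHt lam b.2 ∧ ¬ ∃ b' ∈ LeftSkew k lam mu, KppRel k b b'}

/-- `n(λ/μ) = N(A) - 1`. -/
def nstrip (k : ℕ) (lam mu : ℕ →₀ ℕ) : ℕ := ncomp (AsetD k lam mu) - 1

/-! ### Typed strips and typed `k'`-tableaux. -/

/-- `λ/μ` is a typed `k'`-horizontal strip. -/
def TypedHStrip (k : ℕ) (mu lam : TypedKS k) : Prop :=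
  HStrip k mu.p lam.p ∧ mu.t + lam.t ≠ 3

/-- A typed `k'`-tableau of shape `λ/μ`: a chain of typed `k`-strict partitions
`μ = λ⁰ ⊆ λ¹ ⊆ ⋯` stabilizing at `λ`, each consecutive skew diagram a typed
`k'`-horizontal strip; for `i ≥ 1`, the boxes of `λⁱ/λ^{i-1}` carry the entry `i`
(circled when `type(λⁱ) = 2`). -/
structure Tab (k : ℕ) (mu lam : TypedKS k) where
  c : ℕ → TypedKS k
  first : c 0 = mu
  strips : ∀ i, TypedHStrip k (c i) (c (i + 1))
  last : ∃ N, ∀ i, N ≤ i → c i = lam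

/-- `n(T) = ∑_i n(λⁱ/λ^{i-1})`. -/
def nTab {k : ℕ} {mu lam : TypedKS k} (T : Tab k mu lam) : ℕ :=
  ∑ᶠ i : ℕ, nstrip k (T.c (i + 1)).p (T.c i).p

/-- `E_{λ/μ}(x) = ∑_T 2^{n(T)} x^T`, as a formal power series: the coefficient of the
monomial `x^d` is the sum of `2^{n(T)}` over all typed `k'`-tableaux `T` of shape `λ/μ`
having exactly `d i` entries equal to `i+1` (circled or not). -/
def Efun (k : ℕ) (mu lam : TypedKS k) : MvPowerSeries ℕ ℚ := fun d =>
  ∑ᶠ T : Tab k mu lam,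
    if (∀ i, sz ((T.c (i + 1)).p) = sz ((T.c i).p) + d i) then (2 : ℚ) ^ nTab T else 0

/-- A standard typed `k'`-tableau on `λ/μ`. -/
def IsStdTab {k : ℕ} {mu lam : TypedKS k} (T : Tab k mu lam) : Prop :=
  ∀ i, sz ((T.c i).p) = min (sz mu.p + i) (sz lam.p)

/-- Typed `k'`-tableaux of shape `λ/μ` in the doubled ordered alphabet
`x_1 < x_2 < ⋯ < x'_1 < x'_2 < ⋯`. -/
structure Tab2 (k : ℕ) (mu lam : TypedKS k) where
  c1 : ℕ → TypedKS k
  c2 : ℕ → TypedKS k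
  first : c1 0 = mu
  strips1 : ∀ i, TypedHStrip k (c1 i) (c1 (i + 1))
  link : ∃ N, ∀ i, N ≤ i → c1 i = c2 0
  strips2 : ∀ i, TypedHStrip k (c2 i) (c2 (i + 1))
  last : ∃ N, ∀ i, N ≤ i → c2 i = lam

def nTab2 {k : ℕ} {mu lam : TypedKS k} (T : Tab2 k mu lam) : ℕ :=
  (∑ᶠ i : ℕ, nstrip k (T.c1 (i + 1)).p (T.c1 i).p) +
  ∑ᶠ i : ℕ, nstrip k (T.c2 (i + 1)).p (T.c2 i).p

/-- `E_{λ/μ}(x, x')` in the doubled alphabet, as a formal power series in the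
variables `x` (indexed by `Sum.inl`) and `x'` (indexed by `Sum.inr`). -/
def Efun2 (k : ℕ) (mu lam : TypedKS k) : MvPowerSeries (ℕ ⊕ ℕ) ℚ := fun d =>
  ∑ᶠ T : Tab2 k mu lam,
    if (∀ i, sz ((T.c1 (i + 1)).p) = sz ((T.c1 i).p) + d (Sum.inl i)) ∧
       (∀ i, sz ((T.c2 (i + 1)).p) = sz ((T.c2 i).p) + d (Sum.inr i))
    then (2 : ℚ) ^ nTab2 T else 0

/-! ### The ring `C^(k)` -/

/-- `w_r` as a polynomial generator, `w_0 = 1`. -/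
def wPoly : ℕ → MvPolynomial ℕ ℤ := fun r => if r = 0 then 1 else MvPolynomial.X (r - 1)

/-- The defining relations of the ideal `I^(k)`. -/
def Crel (k : ℕ) : Set (MvPolynomial ℕ ℤ) :=
  {P | ∃ r, k < r ∧ P = wPoly r ^ 2 +
    2 * ∑ i ∈ Finset.Icc 1 r, (-1 : MvPolynomial ℕ ℤ) ^ i * (wPoly (r + i) * wPoly (r - i))}

/-- The ring `C^(k) = ℤ[w_1, w_2, …]/I^(k)`. -/
abbrev Cring (k : ℕ) := MvPolynomial ℕ ℤ ⧸ Ideal.span (Crel k)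

/-- `w_r ∈ C^(k)` for `r : ℤ` (`w_0 = 1`, `w_r = 0` for `r < 0`). -/
def wC (k : ℕ) : ℤ → Cring k := fun r =>
  if r < 0 then 0 else Ideal.Quotient.mk (Ideal.span (Crel k)) (wPoly r.toNat)

/-- The set `C(λ)` (0-indexed pairs). -/
def CsetP (k : ℕ) (lam : ℕ →₀ ℕ) : Set (ℕ × ℕ) :=
  {p | p.1 < p.2 ∧ p.2 + 1 ≤ plen lam ∧ 2 * k + p.2 ≤ lam p.1 + lam p.2 + p.1}

/-- `W^{C(λ)}_α = R^λ w_α`. -/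
def Wop (k : ℕ) (lam : ℕ →₀ ℕ) (α : ℕ → ℤ) : Cring k :=
  RApply (CsetP k lam) (UT \ CsetP k lam) (wC k) α

/-- `W_λ = R^λ w_λ`. -/
def Wgiam (k : ℕ) (lam : ℕ →₀ ℕ) : Cring k := Wop k lam fun i => lam i

/-! ### Power series -/

/-- `q_r(x)`: the coefficient of `x^d` is `2^{#supp d}` when `|d| = r`;
these are the coefficients of `∏_i (1+x_i t)/(1-x_i t) = ∑_r q_r(x) t^r`. -/
def qSer (σ R : Type) [CommRing R] (r : ℤ) : MvPowerSeries σ R := fun d =>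
  if ((d.sum fun _ n => n : ℕ) : ℤ) = r then (2 : R) ^ d.support.card else 0

/-- elementary symmetric polynomials `e_r(y₁, …, y_k)`, `r : ℤ`. -/
def esy (k : ℕ) (r : ℤ) : MvPolynomial (Fin k) ℚ :=
  if 0 ≤ r then MvPolynomial.esymm (Fin k) ℚ r.toNat else 0

/-- `ϑ_r(x; y) = ∑_i q_{r-i}(x) e_i(y)`. -/
def thetaSer (k : ℕ) (σ : Type) (r : ℤ) : MvPowerSeries σ (MvPolynomial (Fin k) ℚ) :=
  ∑ i ∈ Finset.range (k + 1),
    MvPowerSeries.C (σ := σ) (R := MvPolynomial (Fin k) ℚ) (esy k i) * qSer σ (MvPolynomial (Fin k) ℚ) (r - i)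

/-- The set `{(i,j) : i < j, λ_i + λ_j > 2k + j - i}` used in `R̃^λ` (0-indexed pairs). -/
def TCset (k : ℕ) (lam : ℕ →₀ ℕ) : Set (ℕ × ℕ) :=
  {p | p.1 < p.2 ∧ 2 * k + p.2 < lam p.1 + lam p.2 + p.1}

/-- `Θ̂_λ = R^λ ϑ_λ`. -/
def ThetaHat (k : ℕ) (σ : Type) (lam : ℕ →₀ ℕ) : MvPowerSeries σ (MvPolynomial (Fin k) ℚ) :=
  RApply (CsetP k lam) (UT \ CsetP k lam) (thetaSer k σ) fun i => lam i

/-- `Θ_λ = R̃^λ ϑ_λ`. -/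
def ThetaT (k : ℕ) (σ : Type) (lam : ℕ →₀ ℕ) : MvPowerSeries σ (MvPolynomial (Fin k) ℚ) :=
  RApply (TCset k lam) (UT \ TCset k lam) (thetaSer k σ) fun i => lam i

/-- scalar `a : ℚ` as a power series constant. -/
def cq (k : ℕ) (σ : Type) (a : ℚ) : MvPowerSeries σ (MvPolynomial (Fin k) ℚ) :=
  MvPowerSeries.C (σ := σ) (R := MvPolynomial (Fin k) ℚ) (MvPolynomial.C a)

/-- `Ĥ_λ = 2^{-ℓ_k(λ)} Θ̂_λ`. -/
def EtaHat (k : ℕ) (σ : Type) (lam : ℕ →₀ ℕ) : MvPowerSeries σ (MvPolynomial (Fin k) ℚ) :=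
  cq k σ ((2 : ℚ) ^ lenk k lam)⁻¹ * ThetaHat k σ lam

/-- `λ - k`: remove one part equal to `k` (assuming `λ` has one at index `ℓ_k(λ)`). -/
def removeK (k : ℕ) (lam : ℕ →₀ ℕ) : ℕ →₀ ℕ :=
  Finsupp.comapDomain (fun i => if i < lenk k lam then i else i + 1) lam
    (Function.Injective.injOn (by intro a b h; dsimp only at h; split_ifs at h <;> omega))

/-- `H̃_λ = 2^{-ℓ_k(λ)} e_k(y) Θ_{λ-k}` for `λ` of positive type, `0` otherwise. -/
def EtaTilde (k : ℕ) (σ : Type) (lam : ℕ →₀ ℕ) : MvPowerSeries σ (MvPolynomial (Fin k) ℚ) :=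
  if posType k lam then
    cq k σ ((2 : ℚ) ^ lenk k lam)⁻¹ *
      (MvPowerSeries.C (σ := σ) (R := MvPolynomial (Fin k) ℚ) (esy k k) * ThetaT k σ (removeK k lam))
  else 0

/-- The eta polynomial `H_λ(x; y)`. -/
def Eta (k : ℕ) (σ : Type) (lam : TypedKS k) : MvPowerSeries σ (MvPolynomial (Fin k) ℚ) :=
  if lam.t = 0 then EtaHat k σ lam.p
  else if lam.t = 1 then cq k σ (1 / 2) * (EtaHat k σ lam.p + EtaTilde k σ lam.p)
  else cq k σ (1 / 2) * (EtaHat k σ lam.p - EtaTilde k σ lam.p)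

/-- substitute `x_i := x_{i+1}`, i.e. `F(x₂, x₃, …)`. -/
def shiftVar {R : Type} [CommRing R] (F : MvPowerSeries ℕ R) : MvPowerSeries ℕ R := fun d =>
  if d 0 = 0 then F (Finsupp.comapDomain Nat.succ d (Nat.succ_injective.injOn)) else 0

/-- The power series `F` in the variables indexed by the image of an injection `g`. -/
def embVar {σ τ : Type} (g : σ → τ) (hg : Function.Injective g) {R : Type} [CommRing R]
    (F : MvPowerSeries σ R) : MvPowerSeries τ R := fun d =>
  if ∀ s ∈ d.support, s ∈ Set.range g then F (Finsupp.comapDomain g d hg.injOn) else 0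

/-- The Schur polynomial `s_{λ'}(y₁,…,y_k)` of the conjugate partition, via the dual
Jacobi–Trudi formula `det(e_{λ_i - i + j})`. -/
def schurConjE (k : ℕ) (lam : ℕ →₀ ℕ) : MvPolynomial (Fin k) ℚ :=
  (Matrix.of fun i j : Fin (plen lam) => esy k ((lam i : ℤ) - i + j)).det

/-- The Schur `Q`-function of a strict partition. -/
def SchurQ (nu : ℕ →₀ ℕ) : MvPowerSeries ℕ ℚ := RApply UT ∅ (qSer ℕ ℚ) fun i => nu i

/-- The Schur `P`-function `P_ν = 2^{-ℓ(ν)} Q_ν` of a strict partition. -/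
def SchurP (nu : ℕ →₀ ℕ) : MvPowerSeries ℕ ℚ :=
  MvPowerSeries.C (σ := ℕ) (R := ℚ) ((2 : ℚ) ^ plen nu)⁻¹ * SchurQ nu

/-! ### The Weyl group `W̃_∞` of type D, realized by signed permutations of `ℤ`. -/

/-- The simple reflections `s_i`, acting on `ℤ`: `s_0` is `1 ↔ -2, 2 ↔ -1`, and for
`i ≥ 1`, `s_i` is `i ↔ i+1`, `-i ↔ -(i+1)`. -/
def sGen : ℕ → Equiv.Perm ℤ
  | 0 => Equiv.swap 1 (-2) * Equiv.swap 2 (-1)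
  | n + 1 => Equiv.swap ((n : ℤ) + 1) ((n : ℤ) + 2) * Equiv.swap (-(n : ℤ) - 1) (-(n : ℤ) - 2)

/-- `W̃_∞`, the group generated by the `s_i`. -/
def DGrp : Subgroup (Equiv.Perm ℤ) := Subgroup.closure (Set.range sGen)

/-- The length `ℓ(w)`: the least length of an expression of `w` as a product of the `s_i`. -/
def wlen (w : Equiv.Perm ℤ) : ℕ :=
  sInf {m | ∃ l : List ℕ, l.length = m ∧ w = (l.map sGen).prod}

/-- `l` is a reduced word for `w`. -/
def IsRedWord (w : Equiv.Perm ℤ) (l : List ℕ) : Prop :=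
  w = (l.map sGen).prod ∧ l.length = wlen w

/-! ### Stanley symmetric functions and Billey–Haiman Schubert polynomials of type D,
defined through the nilCoxeter-algebra expansions `D(x₁)D(x₂)⋯ = ∑_w E_w(x) u_w` and
`D(x₁)D(x₂)⋯ A₁(y₁)A₂(y₂)⋯ = ∑_w DS_w(x;y) u_w`. -/

/-- A subword of the sequence `(…, 3, 2, 1, 0, 2, 3, …)` occurring in
`D(t) = (1+tuₙ)⋯(1+tu₂)(1+tu₁)(1+tu₀)(1+tu₂)⋯(1+tuₙ)`: a strictly decreasing list
followed by a strictly increasing list with letters `≥ 2`. -/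
def DWord (l : List ℕ) : Prop :=
  ∃ A B : List ℕ, l = A ++ B ∧ A.Chain' (· > ·) ∧ B.Chain' (· < ·) ∧ ∀ b ∈ B, 2 ≤ b

/-- A subword of the sequence `(…, i+1, i)` occurring in `A_i(t) = (1+tuₙ)⋯(1+tu_i)`:
a strictly decreasing list with letters `≥ i`. -/
def AWord (i : ℕ) (l : List ℕ) : Prop := l.Chain' (· > ·) ∧ ∀ a ∈ l, i ≤ a

/-- concatenation `a 0 ++ a 1 ++ ⋯ ++ a (N-1)`. -/
def flatUpTo (a : ℕ → List ℕ) (N : ℕ) : List ℕ := ((List.range N).map a).flatten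

def NBound (d : ℕ →₀ ℕ) : ℕ := d.support.sup id + 1
def NBoundL (d : (ℕ ⊕ ℕ) →₀ ℕ) : ℕ := (d.support.sup fun s => Sum.elim id (fun _ => 0) s) + 1
def NBoundR (d : (ℕ ⊕ ℕ) →₀ ℕ) : ℕ := (d.support.sup fun s => Sum.elim (fun _ => 0) id s) + 1

/-- The type D Stanley symmetric function `E_w(x)`: the coefficient of `x^d` counts the
tuples `(a_1, a_2, …)` of `D`-words with `a_j` of length `d j`, whose concatenation is a
reduced word for `w`. -/
def Ew (w : Equiv.Perm ℤ) : MvPowerSeries ℕ ℚ := fun d =>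
  (Nat.card {a : ℕ → List ℕ // (∀ j, (a j).length = d j) ∧ (∀ j, DWord (a j)) ∧
    IsRedWord w (flatUpTo a (NBound d))} : ℚ)

/-- `E_w(x, x')` in the doubled variable set `x₁, x₂, …, x'₁, x'₂, …`. -/
def Ew2 (w : Equiv.Perm ℤ) : MvPowerSeries (ℕ ⊕ ℕ) ℚ := fun d =>
  (Nat.card {ab : (ℕ → List ℕ) × (ℕ → List ℕ) //
    (∀ j, (ab.1 j).length = d (Sum.inl j)) ∧ (∀ j, (ab.2 j).length = d (Sum.inr j)) ∧
    (∀ j, DWord (ab.1 j)) ∧ (∀ j, DWord (ab.2 j)) ∧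
    IsRedWord w (flatUpTo ab.1 (NBoundL d) ++ flatUpTo ab.2 (NBoundR d))} : ℚ)

/-- The Billey–Haiman Schubert polynomial `DS_w(x; y)`, with the `x` variables indexed by
`Sum.inl` and the `y` variables indexed by `Sum.inr` (`y_{j+1} ↔ Sum.inr j`). -/
def DSw (w : Equiv.Perm ℤ) : MvPowerSeries (ℕ ⊕ ℕ) ℚ := fun d =>
  (Nat.card {ac : (ℕ → List ℕ) × (ℕ → List ℕ) //
    (∀ j, (ac.1 j).length = d (Sum.inl j)) ∧ (∀ j, (ac.2 j).length = d (Sum.inr j)) ∧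
    (∀ j, DWord (ac.1 j)) ∧ (∀ j, AWord (j + 1) (ac.2 j)) ∧
    IsRedWord w (flatUpTo ac.1 (NBoundL d) ++ flatUpTo ac.2 (NBoundR d))} : ℚ)

def NBound3a (d : ((ℕ ⊕ ℕ) ⊕ ℕ) →₀ ℕ) : ℕ :=
  (d.support.sup fun s => Sum.elim (Sum.elim id fun _ => 0) (fun _ => 0) s) + 1
def NBound3b (d : ((ℕ ⊕ ℕ) ⊕ ℕ) →₀ ℕ) : ℕ :=
  (d.support.sup fun s => Sum.elim (Sum.elim (fun _ => 0) id) (fun _ => 0) s) + 1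
def NBound3c (d : ((ℕ ⊕ ℕ) ⊕ ℕ) →₀ ℕ) : ℕ :=
  (d.support.sup fun s => Sum.elim (fun _ => 0) id s) + 1

/-- `DS_w(x, x'; y)` in the doubled `x`-alphabet: variables `x` at `inl ∘ inl`,
`x'` at `inl ∘ inr`, `y` at `inr`. -/
def DSw2 (w : Equiv.Perm ℤ) : MvPowerSeries ((ℕ ⊕ ℕ) ⊕ ℕ) ℚ := fun d =>
  (Nat.card {abc : ((ℕ → List ℕ) × (ℕ → List ℕ)) × (ℕ → List ℕ) //
    (∀ j, (abc.1.1 j).length = d (Sum.inl (Sum.inl j))) ∧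
    (∀ j, (abc.1.2 j).length = d (Sum.inl (Sum.inr j))) ∧
    (∀ j, (abc.2 j).length = d (Sum.inr j)) ∧
    (∀ j, DWord (abc.1.1 j)) ∧ (∀ j, DWord (abc.1.2 j)) ∧ (∀ j, AWord (j + 1) (abc.2 j)) ∧
    IsRedWord w (flatUpTo abc.1.1 (NBound3a d) ++ flatUpTo abc.1.2 (NBound3b d) ++
      flatUpTo abc.2 (NBound3c d))} : ℚ)

/-! ### The `k`-Grassmannian element `w_λ` attached to a typed `k`-strict partition
`λ ∈ P̃(k,n)`, in one-line notation. -/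

/-- `λ` fits in the `(n+1-k) × (n+k)` rectangle, i.e. `λ ∈ P̃(k,n)`. -/
def FitsIn (k n : ℕ) (lam : ℕ →₀ ℕ) : Prop := lam 0 ≤ n + k ∧ plen lam + k ≤ n + 1

/-- The number of boxes of the diagonal `{[r,c] : r + c = d}` of the staircase (columns
`> k`, rows `1..n`) lying outside `λ`. -/
def lenDiag (k n : ℕ) (lam : ℕ →₀ ℕ) (d : ℕ) : ℕ :=
  ((Finset.Icc 1 n).filter fun ρ => ρ + k < d ∧ lam (ρ - 1) + ρ < d).card

/-- The index `r + c` of the diagonal which is `k'`-related to the bottom box of column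
`c ≤ k` of `λ`. -/
def relDiag (k : ℕ) (lam : ℕ →₀ ℕ) (c : ℕ) : ℕ := 2 * k + 1 + colHt lam c - c

/-- `u_1 < u_2 < ⋯ < u_k`: the sorted lengths of the related diagonals. -/
def uListD (k n : ℕ) (lam : ℕ →₀ ℕ) : List ℕ :=
  ((Finset.Icc 1 k).image fun c => lenDiag k n lam (relDiag k lam c)).sort (· ≤ ·)

/-- The barred entries `-(λ¹_1 + 1), …, -(λ¹_r + 1)`, where `λ¹_i = λ_i - k`. -/
def barList (k : ℕ) (lam : ℕ →₀ ℕ) : List ℤ :=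
  (List.range (lenk k lam)).map fun i => -(((lam i : ℤ) - k) + 1)

/-- `v_1 < v_2 < ⋯`: the sorted lengths of the non-related diagonals, i.e. the elements of
`{0, …, n}` distinct from the `u_i`, the `λ¹_i` and `0`. -/
def vListD (k n : ℕ) (lam : ℕ →₀ ℕ) : List ℕ :=
  ((Finset.range (n + 1)).filter fun m =>
    m ∉ ((Finset.Icc 1 k).image fun c => lenDiag k n lam (relDiag k lam c)) ∪
        ((Finset.range (lenk k lam)).image fun i => lam i - k) ∪ {0}).sort (· ≤ ·)

/-- The one-line notation `(w_λ(1), …, w_λ(n+1))` of the `k`-Grassmannian element `w_λ`,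
for `λ` of type `t`. -/
def olist (k n : ℕ) (lam : ℕ →₀ ℕ) (t : ℕ) : List ℤ :=
  let r := lenk k lam
  let bars := barList k lam
  let vs := (vListD k n lam).map fun v => (v : ℤ) + 1
  if t = 1 then
    ((uListD k n lam).map fun u => (u : ℤ) + 1) ++ bars ++
      [if Even r then (1 : ℤ) else -1] ++ vs
  else if t = 2 then
    (match uListD k n lam with
      | [] => []
      | h :: tl => (-((h : ℤ) + 1)) :: tl.map fun u => (u : ℤ) + 1) ++ bars ++
      [if Even r then (-1 : ℤ) else 1] ++ vs
  else
    [if Even r then (1 : ℤ) else -1] ++ ((uListD k n lam).tail.map fun u => (u : ℤ) + 1) ++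
      bars ++ vs

/-- The `k`-Grassmannian element `w_λ` as a function `ℤ → ℤ` (via `w(-i) = -w(i)` and
`w(i) = i` for `i > n+1`). -/
def grassFun (k n : ℕ) (lam : ℕ →₀ ℕ) (t : ℕ) : ℤ → ℤ := fun i =>
  if 1 ≤ i ∧ i ≤ (n : ℤ) + 1 then (olist k n lam t).getD (i - 1).toNat 0
  else if -((n : ℤ) + 1) ≤ i ∧ i ≤ -1 then -((olist k n lam t).getD (-i - 1).toNat 0)
  else i

/-- `w` is the `k`-Grassmannian element `w_λ` of `W̃_{n+1}` attached to `λ`. -/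
def IsGrass (k n : ℕ) (lam : TypedKS k) (w : Equiv.Perm ℤ) : Prop :=
  ∀ i : ℤ, w i = grassFun k n lam.p lam.t i

/-- `w ∈ W̃_∞` is a skew element. -/
def Skew (w : Equiv.Perm ℤ) : Prop :=
  ∃ (k n : ℕ) (lam : TypedKS k) (wl w' : Equiv.Perm ℤ), 0 < k ∧ FitsIn k n lam.p ∧
    IsGrass k n lam wl ∧ w' ∈ DGrp ∧ wl = w * w' ∧ wlen wl = wlen w + wlen w'


/-! ### Additional helpers for individual statements. -/

/-- The set of pairs of the operator `Ψ = ∏_{j=2}^{ℓ+1} (1-R_{1j})/(1+R_{1j})`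
(0-indexed pairh `(0, j)`, `1 ≤ j ≤ ℓ`). -/
def PsiSet (l : ℕ) : Set (ℕ × ℕ) := {q | q.1 = 0 ∧ 1 ≤ q.2 ∧ q.2 ≤ l}

/-- The integer sequence `(p, ν_1, …, ν_ℓ, 0, 0, …)`. -/
def consVec (p : ℤ) {l : ℕ} (ν : Fin l → ℤ) : ℕ → ℤ := fun m =>
  if m = 0 then p else if h : m - 1 < l then ν ⟨m - 1, h⟩ else 0

/-- A filling of the boxes of `μ` by the marked letters `1' < 2' < ⋯ < k'` (coded
`1, …, k`), strictly increasing along rows, weakly increasing down columns. -/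
def ValidFill (k : ℕ) (mu : ℕ →₀ ℕ) (f : ℕ × ℕ → ℕ) : Prop :=
  (∀ b, InDiag mu b → 1 ≤ f b ∧ f b ≤ k) ∧ (∀ b, ¬ InDiag mu b → f b = 0) ∧
  (∀ r c, InDiag mu (r, c + 1) → f (r, c) < f (r, c + 1)) ∧
  (∀ r c, InDiag mu (r + 1, c) → f (r, c) ≤ f (r + 1, c))

/-- The boxes of the diagram of `μ` as a finite set. -/
def boxFinset (mu : ℕ →₀ ℕ) : Finset (ℕ × ℕ) :=
  mu.support.biUnion fun i => (Finset.Icc 1 (mu i)).image fun c => (i + 1, c)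

/-- The monomial `∏_j y_j^{n_j}` of a marked filling, `n_j` the number of entries `j'`. -/
def yMono (k : ℕ) (mu : ℕ →₀ ℕ) (f : ℕ × ℕ → ℕ) : MvPolynomial (Fin k) ℚ :=
  ∏ b ∈ boxFinset mu, (if h : f b - 1 < k then MvPolynomial.X (⟨f b - 1, h⟩ : Fin k) else 1)

/-- The skew Schur S-function `S_{λ/μ}(x) = det(q_{λ_i - μ_j + j - i})`. -/
def Sdet (lam mu : ℕ →₀ ℕ) : MvPowerSeries ℕ ℚ :=
  (Matrix.of fun i j : Fin (plen lam) =>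
    qSer ℕ ℚ ((lam (i : ℕ) : ℤ) - (mu (j : ℕ) : ℤ) + (j : ℕ) - (i : ℕ))).det

/-- The empty typed `k`-strict partition. -/
def emptyTKS (k : ℕ) (hk : 0 < k) : TypedKS k where
  p := 0
  mono := fun _ _ _ => le_rfl
  strict := fun _ _ => by simp
  t := 0
  t_le := by norm_num
  t_pos := by
    constructor
    · intro h; exact absurd rfl h
    · rintro ⟨i, hi⟩
      simp only [Finsupp.coe_zero, Pi.zero_apply] at hi
      omega

lemma embDS_inj :
    Function.Injective (Sum.elim (Sum.inl ∘ Sum.inr) Sum.inr : ℕ ⊕ ℕ → (ℕ ⊕ ℕ) ⊕ ℕ) := by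
  rintro (a | a) (b | b) h <;> simp_all



/-!
`Ψ` only raises the first index, so `Ψ w_{(p,ν)} = ∑_t w_{p+t} [x^t] ∏_i ψ_{ν_i}` with
`ψ_r = ∑_m c_m w_{r-m} x^m`, where `c(x) = ∑_m c_m x^m = (1 - x)/(1 + x)`. The assignment
`w_r ↦ ψ_r` is a ring homomorphism `C^(k) → C^(k)[x]`: writing `W(u) = ∑_r w_r u^r`, we have
`∑_r ψ_r u^r = c(xu) W(u)`; the relations of `I^(k)` are, up to sign, the even coefficients of
`W(-u) W(u)`, which are unchanged because `c(-xu) c(xu) = 1`. Hence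
`∑_ν a_ν Ψ w_{(p,ν)}` is the image of `∑_ν a_ν w_ν` under an additive map.
-/

section
open Finset Polynomial

/-- The coefficients of `(1 - x)/(1 + x)`; `rcoeff` gives each factor of `Ψ` these weights. -/
def psiCoeff (m : ℕ) : ℤ := if m = 0 then 1 else 2 * (-1) ^ m

def psiSeries : PowerSeries ℤ := PowerSeries.mk psiCoeff

lemma one_add_X_mul_psiSeries : (1 + PowerSeries.X) * psiSeries = 1 - PowerSeries.X := by
  ext (_ | _ | n) <;>
    simp [psiSeries, add_mul, PowerSeries.coeff_one, PowerSeries.coeff_X, psiCoeff, pow_succ]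

lemma rescale_neg_one_psiSeries_mul_self : PowerSeries.rescale (-1) psiSeries * psiSeries = 1 := by
  have h' : (1 - PowerSeries.X) * PowerSeries.rescale (-1) psiSeries = 1 + PowerSeries.X := by
    simpa [sub_eq_add_neg] using congrArg (PowerSeries.rescale (-1 : ℤ)) one_add_X_mul_psiSeries
  have hne : (1 + PowerSeries.X) * (1 - PowerSeries.X) ≠ (0 : PowerSeries ℤ) := fun h => by
    simpa using congrArg PowerSeries.constantCoeff h
  refine mul_left_cancel₀ hne ?_
  calc (1 + PowerSeries.X) * (1 - PowerSeries.X) * (PowerSeries.rescale (-1) psiSeries * psiSeries)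
      = ((1 - PowerSeries.X) * PowerSeries.rescale (-1) psiSeries) *
          ((1 + PowerSeries.X) * psiSeries) := by ring
    _ = _ := by rw [h', one_add_X_mul_psiSeries]; ring

section PsiPoly

variable {R : Type*} [CommRing R]

def psiPoly (F : ℤ → R) (r : ℤ) : R[X] :=
  ∑ m ∈ range (r.toNat + 1), monomial m ((psiCoeff m : R) * F (r - m))

lemma psiPoly_zero (F : ℤ → R) : psiPoly F 0 = C (F 0) := by
  simp [psiPoly, psiCoeff]

lemma psiPoly_of_neg {F : ℤ → R} (hF : ∀ s < 0, F s = 0) {r : ℤ} (hr : r < 0) :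
    psiPoly F r = 0 := by
  simp [psiPoly, Int.toNat_of_nonpos hr.le, hF r hr]

/-- `x ^ t ↦ F (p + t)`: puts the total raising of the first index back into the first entry. -/
def prependEval (F : ℤ → R) (p : ℤ) : R[X] →ₗ[R] R :=
  Polynomial.lsum fun t => LinearMap.mulLeft R (F (p + t))

lemma prependEval_monomial (F : ℤ → R) (p : ℤ) (n : ℕ) (a : R) :
    prependEval F p (monomial n a) = F (p + n) * a := by
  simp [prependEval, sum_monomial_index]

lemma prod_monomial {ι : Type*} (s : Finset ι) (n : ι → ℕ) (a : ι → R) :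
    ∏ i ∈ s, monomial (n i) (a i) = monomial (∑ i ∈ s, n i) (∏ i ∈ s, a i) := by
  simp_rw [← C_mul_X_pow_eq_monomial]
  rw [prod_mul_distrib, ← map_prod, prod_pow_eq_pow_sum]

lemma prependEval_prod_psiPoly (F : ℤ → R) (p : ℤ) {l : ℕ} (ν : Fin l → ℤ) :
    prependEval F p (∏ i, psiPoly F (ν i)) =
      ∑ d ∈ Fintype.piFinset fun i => range ((ν i).toNat + 1),
        F (p + ((∑ i, d i : ℕ) : ℤ)) * ∏ i, ((psiCoeff (d i) : R) * F (ν i - d i)) := by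
  simp only [psiPoly, prod_univ_sum, map_sum]
  refine sum_congr rfl fun d _ => ?_
  rw [prod_monomial, prependEval_monomial]

end PsiPoly

section RaisingOperators

@[to_additive]
lemma finprod_eq_mul_prod_fin {M : Type*} [CommMonoid M] (g : ℕ → M) (l : ℕ)
    (hg : ∀ m, l < m → g m = 1) : ∏ᶠ m, g m = g 0 * ∏ i : Fin l, g (i + 1) := by
  rw [finprod_eq_prod_of_mulSupport_subset g (s := range (l + 1)) fun m hm => by
      by_contra h; exact hm (hg m (by simpa using h)),
    prod_range_succ', Fin.prod_univ_eq_prod_range (fun i => g (i + 1)), mul_comm]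

lemma rcoeff_eq_zero_of_not_subset {Dfull Done : Set (ℕ × ℕ)} {n : (ℕ × ℕ) →₀ ℕ}
    (h : ¬ (n.support : Set (ℕ × ℕ)) ⊆ Dfull ∪ Done) : rcoeff Dfull Done n = 0 := by
  obtain ⟨q, hq, hqD⟩ := Set.not_subset.1 h
  rw [Set.mem_union, not_or] at hqD
  refine finprod_eq_zero _ q ?_ ((n.support.finite_toSet).subset fun x hx => ?_)
  · simp [hqD.1, hqD.2, Finsupp.mem_support_iff.1 hq]
  · by_contra hx'
    simp [Finsupp.notMem_support_iff.1 hx'] at hx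

variable {l : ℕ}

def firstRowEmb (l : ℕ) : Fin l ↪ ℕ × ℕ :=
  ⟨fun i => (0, i + 1), fun i j h => Fin.ext (by simpa using h)⟩

@[simp] lemma firstRowEmb_apply (i : Fin l) : firstRowEmb l i = (0, (i : ℕ) + 1) := rfl

lemma mem_range_firstRowEmb {q : ℕ × ℕ} : q ∈ Set.range (firstRowEmb l) ↔ q ∈ PsiSet l := by
  constructor
  · rintro ⟨i, rfl⟩
    exact ⟨rfl, by simp, by simp⟩
  · rintro ⟨h0, h1, hl⟩
    exact ⟨⟨q.2 - 1, by omega⟩, Prod.ext h0.symm (by simp; omega)⟩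

/-- The raising-operator monomial `∏_i R_{1,i+2}^{d_i}`. -/
def firstRowOp (d : Fin l → ℕ) : (ℕ × ℕ) →₀ ℕ :=
  (Finsupp.equivFunOnFinite.symm d).embDomain (firstRowEmb l)

lemma firstRowOp_apply_succ (d : Fin l → ℕ) (i : Fin l) : firstRowOp d (0, i + 1) = d i :=
  Finsupp.embDomain_apply_self (firstRowEmb l) _ i

lemma firstRowOp_apply_of_notMem (d : Fin l → ℕ) {q : ℕ × ℕ} (hq : q ∉ PsiSet l) :
    firstRowOp d q = 0 :=
  Finsupp.embDomain_of_notMem_range _ _ _ (mt mem_range_firstRowEmb.1 hq)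

lemma firstRowOp_injective : Function.Injective (firstRowOp (l := l)) := fun _ _ h =>
  Finsupp.equivFunOnFinite.symm.injective (Finsupp.embDomain_injective _ h)

lemma exists_firstRowOp_of_support_subset {n : (ℕ × ℕ) →₀ ℕ}
    (h : (n.support : Set (ℕ × ℕ)) ⊆ PsiSet l) : ∃ d : Fin l → ℕ, firstRowOp d = n := by
  refine ⟨fun i => n (0, i + 1), Finsupp.ext fun q => ?_⟩
  by_cases hq : q ∈ PsiSet l
  · obtain ⟨i, rfl⟩ := mem_range_firstRowEmb.2 hq
    exact firstRowOp_apply_succ _ i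
  · rw [firstRowOp_apply_of_notMem _ hq, eq_comm, ← Finsupp.notMem_support_iff]
    exact fun hn => hq (h hn)

lemma rcoeff_firstRowOp (Done : Set (ℕ × ℕ)) (d : Fin l → ℕ) :
    rcoeff (PsiSet l) Done (firstRowOp d) = ∏ i, psiCoeff (d i) := by
  rw [rcoeff, finprod_eq_prod_of_mulSupport_subset _ (s := univ.map (firstRowEmb l))
    fun q hq => ?_, prod_map]
  · refine prod_congr rfl fun i _ => ?_
    rw [if_pos (mem_range_firstRowEmb.1 ⟨i, rfl⟩), firstRowEmb_apply, firstRowOp_apply_succ,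
      psiCoeff]
  · by_contra hq'
    have hq'' : q ∉ PsiSet l := fun h => hq' (by
      obtain ⟨i, rfl⟩ := mem_range_firstRowEmb.2 h; simp)
    simp [hq'', firstRowOp_apply_of_notMem d hq''] at hq

lemma net_firstRowOp_zero (d : Fin l → ℕ) : net (firstRowOp d) 0 = ∑ i, (d i : ℤ) := by
  have hcol : ∀ i, (firstRowOp d (i, 0) : ℤ) = 0 := fun i => by
    rw [firstRowOp_apply_of_notMem d fun h => by simp [PsiSet] at h]; rfl
  rw [net, finsum_eq_add_sum_fin _ l fun m hm => by
      rw [firstRowOp_apply_of_notMem d fun h => by simp [PsiSet] at h; omega]; rfl]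
  simp only [hcol, firstRowOp_apply_succ, finsum_zero, sub_zero, zero_add]

lemma net_firstRowOp_succ (d : Fin l → ℕ) (i : Fin l) :
    net (firstRowOp d) (i + 1) = -(d i : ℤ) := by
  rw [net, finsum_eq_zero_of_forall_eq_zero fun j => by
      rw [firstRowOp_apply_of_notMem d fun h => by simp [PsiSet] at h]; rfl,
    finsum_eq_single _ 0 fun j hj => by
      rw [firstRowOp_apply_of_notMem d fun h => hj h.1]; rfl,
    firstRowOp_apply_succ, zero_sub]

lemma net_firstRowOp_of_lt (d : Fin l → ℕ) {m : ℕ} (hm : l < m) : net (firstRowOp d) m = 0 := by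
  rw [net, finsum_eq_zero_of_forall_eq_zero fun j => by
      rw [firstRowOp_apply_of_notMem d fun h => by simp [PsiSet] at h; omega]; rfl,
    finsum_eq_zero_of_forall_eq_zero fun j => by
      rw [firstRowOp_apply_of_notMem d fun h => by simp [PsiSet] at h; omega]; rfl, sub_zero]

variable {R : Type} [CommRing R]

lemma finprod_consVec_add_net_firstRowOp {F : ℤ → R} (hF0 : F 0 = 1) (p : ℤ) (ν : Fin l → ℤ)
    (d : Fin l → ℕ) :
    ∏ᶠ m, F (consVec p ν m + net (firstRowOp d) m) =
      F (p + ((∑ i, d i : ℕ) : ℤ)) * ∏ i, F (ν i - d i) := by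
  rw [finprod_eq_mul_prod_fin _ l fun m hm => by
    rw [net_firstRowOp_of_lt d hm, consVec, if_neg (by omega), dif_neg (by omega), add_zero, hF0]]
  simp only [consVec, net_firstRowOp_zero, net_firstRowOp_succ, if_true, Nat.add_sub_cancel,
    Fin.is_lt, dif_pos, Nat.add_one_ne_zero, if_false, Nat.cast_sum, Fin.eta, sub_eq_add_neg]

lemma RApply_psiSet_consVec {F : ℤ → R} (hF0 : F 0 = 1) (hF : ∀ s < 0, F s = 0)
    (p : ℤ) (ν : Fin l → ℤ) :
    RApply (PsiSet l) ∅ F (consVec p ν) = prependEval F p (∏ i, psiPoly F (ν i)) := by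
  set T : ((ℕ × ℕ) →₀ ℕ) → R :=
    fun n => rcoeff (PsiSet l) ∅ n • ∏ᶠ m, F (consVec p ν m + net n m)
  have hT : ∀ d, T (firstRowOp d) =
      F (p + ((∑ i, d i : ℕ) : ℤ)) * ∏ i, ((psiCoeff (d i) : R) * F (ν i - d i)) := fun d => by
    simp only [T, rcoeff_firstRowOp, finprod_consVec_add_net_firstRowOp hF0, zsmul_eq_mul,
      Int.cast_prod, prod_mul_distrib]
    ring
  have hsupp : Function.support T ⊆
      ((Fintype.piFinset fun i => range ((ν i).toNat + 1)).image firstRowOp : Finset _) := by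
    intro n hn
    obtain ⟨d, rfl⟩ : ∃ d : Fin l → ℕ, firstRowOp d = n :=
      exists_firstRowOp_of_support_subset <| by
        by_contra h
        exact hn (by simp [T, rcoeff_eq_zero_of_not_subset (Done := ∅) (by simpa using h)])
    refine mem_image_of_mem _ (Fintype.mem_piFinset.2 fun i => mem_range.2 ?_)
    by_contra hi
    refine hn ?_
    rw [hT, prod_eq_zero (mem_univ i) (by rw [hF _ (by omega), mul_zero]), mul_zero]
  rw [RApply, finsum_eq_sum_of_support_subset T hsupp,
    sum_image fun _ _ _ _ h => firstRowOp_injective h, prependEval_prod_psiPoly]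
  exact sum_congr rfl fun d _ => hT d

end RaisingOperators

section Relations

lemma sum_range_two_mul_add_one {M : Type*} [AddCommMonoid M] (g : ℕ → M) (r : ℕ) :
    ∑ a ∈ range (2 * r + 1), g a
      = ∑ j ∈ range r, g (r - 1 - j) + g r + ∑ j ∈ range r, g (r + 1 + j) := by
  rw [show 2 * r + 1 = r + (r + 1) by ring, sum_range_add, sum_range_succ', sum_range_reflect g r]
  simp only [add_zero, add_assoc, add_comm 1]
  rw [add_comm (g r)]

variable {S : Type*} [CommRing S]

def wRel (F : ℕ → S) (r : ℕ) : S :=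
  F r ^ 2 + 2 * ∑ i ∈ Icc 1 r, (-1) ^ i * (F (r + i) * F (r - i))

lemma wRel_eq_coeff (F : ℕ → S) (r : ℕ) :
    wRel F r = (-1) ^ r * PowerSeries.coeff (2 * r)
      (PowerSeries.rescale (-1) (PowerSeries.mk F) * PowerSeries.mk F) := by
  have hsign : ∀ a b : ℕ, a % 2 = b % 2 → (-1 : S) ^ a = (-1) ^ b := fun a b h => by
    rw [neg_one_pow_eq_pow_mod_two, h, ← neg_one_pow_eq_pow_mod_two]
  have hcentre : (-1) ^ r * ((-1) ^ r * F r * F (2 * r - r)) = F r ^ 2 := by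
    rw [← mul_assoc, ← mul_assoc, ← pow_add, hsign _ 0 (by omega), show 2 * r - r = r by omega]
    ring
  -- the terms `a = r - i` and `a = r + i` of the coefficient pair up
  have hpair : ∀ j ∈ range r,
      (-1) ^ r * ((-1) ^ (r - 1 - j) * F (r - 1 - j) * F (2 * r - (r - 1 - j)) +
        (-1) ^ (r + 1 + j) * F (r + 1 + j) * F (2 * r - (r + 1 + j)))
        = 2 * ((-1) ^ (1 + j) * (F (r + (1 + j)) * F (r - (1 + j)))) := by
    intro j hj
    have hj := mem_range.1 hj
    have e1 : (-1 : S) ^ r * (-1) ^ (r - 1 - j) = (-1) ^ (1 + j) := by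
      rw [← pow_add]; exact hsign _ _ (by omega)
    have e2 : (-1 : S) ^ r * (-1) ^ (r + 1 + j) = (-1) ^ (1 + j) := by
      rw [← pow_add]; exact hsign _ _ (by omega)
    rw [show 2 * r - (r - 1 - j) = r + (1 + j) by omega,
      show 2 * r - (r + 1 + j) = r - (1 + j) by omega, show r - 1 - j = r - (1 + j) by omega,
      show r + 1 + j = r + (1 + j) by omega] at *
    linear_combination (F (r + (1 + j)) * F (r - (1 + j))) * (e1 + e2)
  rw [PowerSeries.coeff_mul, Nat.sum_antidiagonal_eq_sum_range_succ
    (fun a b => PowerSeries.coeff a (PowerSeries.rescale (-1) (PowerSeries.mk F)) *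
      PowerSeries.coeff b (PowerSeries.mk F)), sum_range_two_mul_add_one]
  simp only [PowerSeries.coeff_rescale, PowerSeries.coeff_mk]
  rw [wRel, ← Ico_add_one_right_eq_Icc, sum_Ico_eq_sum_range, Nat.add_sub_cancel, mul_add,
    mul_add, hcentre, add_right_comm, ← mul_add, ← sum_add_distrib, mul_sum,
    mul_sum _ _ ((-1 : S) ^ r), sum_congr rfl hpair, add_comm]

lemma map_wRelPoly (φ : MvPolynomial ℕ ℤ →+* S) (r : ℕ) :
    φ (wPoly r ^ 2 + 2 * ∑ i ∈ Icc 1 r, (-1) ^ i * (wPoly (r + i) * wPoly (r - i))) =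
      wRel (fun n => φ (wPoly n)) r := by
  simp [wRel, map_sum, map_ofNat]

lemma mk_psiPoly (F : ℤ → S) :
    PowerSeries.mk (fun n : ℕ => psiPoly F n) =
      PowerSeries.rescale X (PowerSeries.map (Int.castRingHom S[X]) psiSeries) *
        PowerSeries.map C (PowerSeries.mk fun n : ℕ => F n) := by
  ext n : 1
  rw [PowerSeries.coeff_mk, PowerSeries.coeff_mul, Nat.sum_antidiagonal_eq_sum_range_succ
    (fun a b => PowerSeries.coeff a _ * PowerSeries.coeff b _), psiPoly, Int.toNat_natCast]
  refine sum_congr rfl fun m hm => ?_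
  have hm : m ≤ n := Nat.lt_succ_iff.1 (mem_range.1 hm)
  simp only [PowerSeries.coeff_rescale, PowerSeries.coeff_map, PowerSeries.coeff_mk, psiSeries,
    eq_intCast, Nat.cast_sub hm, ← C_mul_X_pow_eq_monomial, map_mul, map_intCast]
  ring

lemma wRel_psiPoly (F : ℤ → S) (r : ℕ) :
    wRel (fun n : ℕ => psiPoly F n) r = C (wRel (fun n : ℕ => F n) r) := by
  set G := PowerSeries.mk fun n : ℕ => F n
  set c := PowerSeries.map (Int.castRingHom S[X]) psiSeries
  have hc : PowerSeries.rescale (-1) c * c = 1 := by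
    rw [show (-1 : S[X]) = Int.castRingHom S[X] (-1) by simp, PowerSeries.rescale_map,
      ← map_mul, rescale_neg_one_psiSeries_mul_self, map_one]
  have hA : PowerSeries.rescale (-1) (PowerSeries.rescale X c) =
      PowerSeries.rescale X (PowerSeries.rescale (-1) c) := by
    rw [PowerSeries.rescale_rescale, PowerSeries.rescale_rescale, mul_comm]
  have hB : PowerSeries.rescale (-1) (PowerSeries.map C G) =
      PowerSeries.map C (PowerSeries.rescale (-1) G) := by
    rw [← PowerSeries.rescale_map, map_neg, map_one]
  have hsq : PowerSeries.rescale (-1) (PowerSeries.rescale X c * PowerSeries.map C G) *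
      (PowerSeries.rescale X c * PowerSeries.map C G) =
        PowerSeries.map C (PowerSeries.rescale (-1) G * G) := by
    calc _ = PowerSeries.rescale X (PowerSeries.rescale (-1) c * c) *
          (PowerSeries.map C (PowerSeries.rescale (-1) G) * PowerSeries.map C G) := by
            rw [map_mul, hA, hB, map_mul]; ring
      _ = _ := by rw [hc, map_one, one_mul, map_mul]
  rw [wRel_eq_coeff, wRel_eq_coeff, mk_psiPoly, hsq, PowerSeries.coeff_map, C_mul, C_pow, C_neg,
    C_1]

end Relations

section PsiHom

variable {k : ℕ}

lemma wC_natCast (n : ℕ) : wC k n = Ideal.Quotient.mk (Ideal.span (Crel k)) (wPoly n) := by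
  simp [wC]

lemma wC_of_neg {r : ℤ} (hr : r < 0) : wC k r = 0 := if_pos hr

lemma wC_zero : wC k 0 = 1 := by
  simpa [wPoly] using wC_natCast (k := k) 0

lemma wRel_wC {r : ℕ} (hr : k < r) : wRel (fun n : ℕ => wC k n) r = 0 := by
  simp only [wC_natCast]
  rw [← map_wRelPoly, Ideal.Quotient.eq_zero_iff_mem]
  exact Ideal.subset_span ⟨r, hr, rfl⟩

def psiPolyHom (k : ℕ) : MvPolynomial ℕ ℤ →+* (Cring k)[X] :=
  MvPolynomial.eval₂Hom (Int.castRingHom _) fun i => psiPoly (wC k) ((i + 1 : ℕ) : ℤ)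

lemma psiPolyHom_wPoly (n : ℕ) : psiPolyHom k (wPoly n) = psiPoly (wC k) n := by
  cases n with
  | zero => simp [wPoly, psiPoly_zero, wC_zero]
  | succ n => simp [wPoly, psiPolyHom]

def psiHom (k : ℕ) : Cring k →+* (Cring k)[X] :=
  Ideal.Quotient.lift _ (psiPolyHom k) fun P hP => RingHom.mem_ker.1 <|
    (Ideal.span_le.2 fun Q hQ => by
      obtain ⟨r, hr, rfl⟩ := hQ
      rw [SetLike.mem_coe, RingHom.mem_ker, map_wRelPoly (S := (Cring k)[X])]
      simp only [psiPolyHom_wPoly, wRel_psiPoly, wRel_wC hr, map_zero]) hP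

lemma psiHom_wC (r : ℤ) : psiHom k (wC k r) = psiPoly (wC k) r := by
  rcases lt_or_ge r 0 with hr | hr
  · rw [wC_of_neg hr, map_zero, psiPoly_of_neg (fun _ => wC_of_neg) hr]
  · obtain ⟨n, rfl⟩ := Int.eq_ofNat_of_zero_le hr
    rw [wC_natCast, psiHom, Ideal.Quotient.lift_mk, psiPolyHom_wPoly]

end PsiHom

end

theorem statement0_general (k : ℕ) (lam : KStrict k) (p : ℤ)
    (a b : (Fin (plen lam.p) → ℤ) → ℤ)
    (ha : (Function.support a).Finite) (hb : (Function.support b).Finite)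
    (h : ∑ᶠ ν : Fin (plen lam.p) → ℤ, a ν • ∏ i, wC k (ν i) =
         ∑ᶠ ν : Fin (plen lam.p) → ℤ, b ν • ∏ i, wC k (ν i)) :
    ∑ᶠ ν : Fin (plen lam.p) → ℤ,
        a ν • RApply (PsiSet (plen lam.p)) ∅ (wC k) (consVec p ν) =
    ∑ᶠ ν : Fin (plen lam.p) → ℤ,
        b ν • RApply (PsiSet (plen lam.p)) ∅ (wC k) (consVec p ν) := by
  set Φ : Cring k →+ Cring k :=
    (prependEval (wC k) p).toAddMonoidHom.comp (psiHom k).toAddMonoidHom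
  have hΦ : ∀ ν : Fin (plen lam.p) → ℤ,
      RApply (PsiSet (plen lam.p)) ∅ (wC k) (consVec p ν) = Φ (∏ i, wC k (ν i)) := fun ν => by
    change _ = prependEval (wC k) p (psiHom k _)
    simp_rw [map_prod, psiHom_wC]
    exact RApply_psiSet_consVec wC_zero (fun _ => wC_of_neg) p ν
  have hlin : ∀ c : (Fin (plen lam.p) → ℤ) → ℤ, (Function.support c).Finite →
      ∑ᶠ ν, c ν • RApply (PsiSet (plen lam.p)) ∅ (wC k) (consVec p ν) =
        Φ (∑ᶠ ν, c ν • ∏ i, wC k (ν i)) := fun c hc => by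
    have hfin : (Function.support fun ν => c ν • ∏ i, wC k (ν i)).Finite :=
      hc.subset (Function.support_smul_subset_left c _)
    simp only [map_finsum Φ hfin, map_zsmul, hΦ]
  rw [hlin a ha, hlin b hb, h]

/-- if `∑_ν a_ν w_ν = ∑_ν b_ν w_ν` in `C^(k)`, with `ν` ranging over integer
vectors of length `ℓ = ℓ(λ)`, then `∑_ν a_ν Ψ w_{(p,ν)} = ∑_ν b_ν Ψ w_{(p,ν)}` where
`Ψ = ∏_{j=2}^{ℓ+1} (1-R_{1j})/(1+R_{1j})`. -/
theorem statement0 (k : ℕ) (hk : 0 < k) (lam : KStrict k) (p : ℤ)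
    (a b : (Fin (plen lam.p) → ℤ) → ℤ)
    (ha : (Function.support a).Finite) (hb : (Function.support b).Finite)
    (h : ∑ᶠ ν : Fin (plen lam.p) → ℤ, a ν • ∏ i, wC k (ν i) =
         ∑ᶠ ν : Fin (plen lam.p) → ℤ, b ν • ∏ i, wC k (ν i)) :
    ∑ᶠ ν : Fin (plen lam.p) → ℤ,
        a ν • RApply (PsiSet (plen lam.p)) ∅ (wC k) (consVec p ν) =
    ∑ᶠ ν : Fin (plen lam.p) → ℤ,
        b ν • RApply (PsiSet (plen lam.p)) ∅ (wC k) (consVec p ν) :=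
  statement0_general k lam p a b ha hb h

end EtaP
end
end

section
/- Let λ be a typed k-strict partition and let H_λ(0; y) be obtained from the eta polynomial H_λ(x; y) by setting x_i = 0 for all i ≥ 1. Then H_λ(0; y) = 0 if λ_1 > k; H_λ(0; y) = s_{λ'}(y) if λ_1 = k and type(λ) = 1; H_λ(0; y) = 0 if λ_1 = k and type(λ) = 2; and H_λ(0; y) = s_{λ'}(y) if λ_1 < k, where λ' is the conjugate partition of λ and s_{λ'}(y) is the Schur polynomial in y = (y_1,…,y_k). -/
noncomputable section
open scoped Classical

namespace EtaP

/-!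
Setting `x = 0` turns `ϑ_r(x; y)` into `e_r(y)`, so the constant term of a raising-operator
expression in the `ϑ`'s is the same expression in the `e`'s. Since `R_{ij}` with `i < j` never
lowers the first entry, every term of `Θ̂_λ` and of `Θ_{λ-k}` contains some `e_r(y)` with
`r ≥ λ_1`; these all vanish when `λ_1 > k`. When `λ_1 ≤ k` the sets `C(λ)` and
`{(i,j) : ν_i + ν_j > 2k + j - i}` are empty, so only `∏_{i<j} (1 - R_{ij})` remains, and the
raising-operator form of the Jacobi–Trudi identity turns the constant term into
`det(e_{λ_i - i + j}(y)) = s_{λ'}(y)`. When `λ_1 = k` the first row of this determinant is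
`(e_k, 0, …, 0)`, whence `s_{λ'} = e_k s_{(λ-k)'}`: `Ĥ_λ` and `H̃_λ` have the same constant term,
which their half-sum keeps and their half-difference kills. When `λ_1 < k` the type is `0`.
-/

open Finset

lemma qSer_of_neg {σ R : Type} [CommRing R] {r : ℤ} (hr : r < 0) : qSer σ R r = 0 := by
  ext d
  simp only [MvPowerSeries.coeff_apply, qSer, map_zero]
  exact if_neg (by omega)

lemma qSer_zero (σ R : Type) [CommRing R] : qSer σ R 0 = 1 := by
  ext d
  have hdeg : (d.sum fun _ n => n) = d.degree := rfl
  rw [MvPowerSeries.coeff_one, MvPowerSeries.coeff_apply]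
  simp only [qSer, hdeg, Nat.cast_eq_zero, Finsupp.degree_eq_zero_iff]
  split_ifs with hd <;> simp [hd]

lemma constantCoeff_qSer (σ R : Type) [CommRing R] (r : ℤ) :
    MvPowerSeries.constantCoeff (qSer σ R r) = if r = 0 then 1 else 0 := by
  rw [← MvPowerSeries.coeff_zero_eq_constantCoeff_apply, MvPowerSeries.coeff_apply, qSer]
  simp [eq_comm]

lemma esy_of_neg {k : ℕ} {r : ℤ} (hr : r < 0) : esy k r = 0 := if_neg (by omega)

lemma esy_zero (k : ℕ) : esy k 0 = 1 := by
  simp [esy, MvPolynomial.esymm_zero]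

lemma esy_of_lt {k : ℕ} {r : ℤ} (hr : (k : ℤ) < r) : esy k r = 0 := by
  rw [esy, if_pos (by omega), MvPolynomial.esymm,
    powersetCard_eq_empty.2 (by simp; omega), sum_empty]

lemma thetaSer_of_neg {k : ℕ} {σ : Type} {r : ℤ} (hr : r < 0) : thetaSer k σ r = 0 :=
  sum_eq_zero fun i _ => by rw [qSer_of_neg (by omega), mul_zero]

lemma thetaSer_zero (k : ℕ) (σ : Type) : thetaSer k σ 0 = 1 := by
  rw [thetaSer, sum_eq_single_of_mem 0 (by simp)]
  · simp [qSer_zero, esy_zero]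
  · intro i _ hi
    rw [qSer_of_neg (by omega), mul_zero]

lemma constantCoeff_thetaSer (k : ℕ) (σ : Type) (r : ℤ) :
    MvPowerSeries.constantCoeff (thetaSer k σ r) = esy k r := by
  simp only [thetaSer, map_sum, map_mul, MvPowerSeries.constantCoeff_C, constantCoeff_qSer,
    mul_ite, mul_one, mul_zero, sub_eq_zero]
  rcases lt_or_ge r 0 with hr | hr
  · rw [esy_of_neg hr, sum_eq_zero fun i _ => if_neg (by omega)]
  rcases le_or_gt r k with hrk | hrk
  · lift r to ℕ using hr
    simp only [Nat.cast_inj]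
    rw [sum_ite_eq, if_pos (by simp; omega)]
  · rw [esy_of_lt hrk, sum_eq_zero fun i hi => if_neg (by simp at hi; omega)]

section Partition

variable {k : ℕ} {μ : ℕ →₀ ℕ}

lemma ne_zero_iff_lt_plen (hμ : Antitone μ) {m : ℕ} : μ m ≠ 0 ↔ m < plen μ := by
  constructor
  · intro hm
    have hsub : range (m + 1) ⊆ μ.support := fun i hi =>
      Finsupp.mem_support_iff.2 fun h0 =>
        hm (Nat.eq_zero_of_le_zero (h0 ▸ hμ (Nat.lt_succ_iff.1 (mem_range.1 hi))))
    simpa [plen] using card_le_card hsub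
  · intro hm h0
    have hsub : μ.support ⊆ range m := fun i hi => mem_range.2 <| by
      by_contra hmi
      exact Finsupp.mem_support_iff.1 hi (Nat.eq_zero_of_le_zero (h0 ▸ hμ (not_lt.1 hmi)))
    have := card_le_card hsub
    simp only [card_range] at this
    exact absurd hm (not_lt.2 this)

lemma eq_zero_of_plen_le (hμ : Antitone μ) {m : ℕ} (hm : plen μ ≤ m) : μ m = 0 :=
  not_not.1 fun h => (ne_zero_iff_lt_plen hμ).1 h |>.not_ge hm

lemma plen_eq_of_ne_zero_iff {L : ℕ} (h : ∀ m, μ m ≠ 0 ↔ m < L) : plen μ = L := by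
  have hsupp : μ.support = range L := by
    ext m
    rw [Finsupp.mem_support_iff, h, mem_range]
  rw [plen, hsupp, card_range]

lemma lenk_eq_zero (hμ : Antitone μ) (h : μ 0 ≤ k) : lenk k μ = 0 :=
  card_eq_zero.2 <| filter_eq_empty_iff.2 fun i _ => (hμ i.zero_le).trans h |>.not_gt

lemma lenk_pos (h : k < μ 0) : 0 < lenk k μ :=
  card_pos.2 ⟨0, mem_filter.2 ⟨Finsupp.mem_support_iff.2 (by omega), h⟩⟩

lemma CsetP_eq_empty (hμ : Antitone μ) (h : μ 0 ≤ k) : CsetP k μ = ∅ :=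
  Set.eq_empty_of_forall_notMem fun p hp => by
    have := hμ p.1.zero_le
    have := hμ p.2.zero_le
    simp only [CsetP, Set.mem_ofPred_eq] at hp
    omega

lemma TCset_eq_empty (hμ : Antitone μ) (h : μ 0 ≤ k) : TCset k μ = ∅ :=
  Set.eq_empty_of_forall_notMem fun p hp => by
    have := hμ p.1.zero_le
    have := hμ p.2.zero_le
    simp only [TCset, Set.mem_ofPred_eq] at hp
    omega

lemma removeK_apply (k : ℕ) (μ : ℕ →₀ ℕ) (i : ℕ) :
    removeK k μ i = μ (if i < lenk k μ then i else i + 1) :=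
  Finsupp.comapDomain_apply _ _ _ _

lemma antitone_removeK (hμ : Antitone μ) : Antitone (removeK k μ) := fun i j hij => by
  simp only [removeK_apply]
  exact hμ (by split_ifs <;> omega)

lemma removeK_zero_of_lenk_pos (h : 0 < lenk k μ) : removeK k μ 0 = μ 0 := by
  rw [removeK_apply, if_pos h]

lemma removeK_apply_of_lenk_eq_zero (h : lenk k μ = 0) (i : ℕ) : removeK k μ i = μ (i + 1) := by
  rw [removeK_apply, h, if_neg i.not_lt_zero]

end Partition

lemma det_esy_succ {k : ℕ} (α : ℕ → ℤ) (n : ℕ) (h : α 0 = k) :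
    (Matrix.of fun i j : Fin (n + 1) => esy k (α i - i + j)).det =
      esy k k * (Matrix.of fun i j : Fin n => esy k (α (i + 1) - i + j)).det := by
  rw [Matrix.det_succ_row_zero, Fin.sum_univ_succ,
    sum_eq_zero fun j _ => by simp [esy_of_lt, h], add_zero]
  simp only [Matrix.of_apply, Fin.val_zero, Fin.succAbove_zero, h]
  congr 2
  · simp
  · refine Matrix.ext fun i j => ?_
    simp only [Matrix.submatrix_apply, Matrix.of_apply, Fin.val_succ]
    congr 1
    push_cast
    ring

lemma schurConjE_eq_esy_mul_removeK {k : ℕ} {μ : ℕ →₀ ℕ} (hμ : Antitone μ) (h : μ 0 = k) :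
    schurConjE k μ = esy k k * schurConjE k (removeK k μ) := by
  have hlenk := lenk_eq_zero hμ h.le
  have hplen : plen (removeK k μ) = plen μ - 1 := plen_eq_of_ne_zero_iff fun m => by
    rw [removeK_apply_of_lenk_eq_zero hlenk, ne_zero_iff_lt_plen hμ]
    omega
  rcases Nat.eq_zero_or_pos (plen μ) with h0 | hpos
  · have hk : k = 0 := h ▸ eq_zero_of_plen_le hμ h0.le
    subst hk
    rw [schurConjE, schurConjE, hplen, h0]
    simp [esy_zero]
  · obtain ⟨n, hn⟩ := Nat.exists_eq_add_of_lt hpos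
    rw [zero_add] at hn
    rw [schurConjE, schurConjE, hplen, hn, Nat.add_sub_cancel,
      det_esy_succ (fun i => μ i) n (by simp [h])]
    simp only [removeK_apply_of_lenk_eq_zero hlenk]

section RaisingOperators

/-- The exponent vector of the square-free raising monomial `∏_{p ∈ S} R_p`. -/
def indicatorOne (S : Finset (ℕ × ℕ)) : (ℕ × ℕ) →₀ ℕ := Finsupp.indicator S fun _ _ => 1

lemma indicatorOne_apply (S : Finset (ℕ × ℕ)) (p : ℕ × ℕ) :
    indicatorOne S p = if p ∈ S then 1 else 0 :=
  Finsupp.indicator_apply _ _ _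

lemma support_indicatorOne (S : Finset (ℕ × ℕ)) : (indicatorOne S).support = S := by
  ext p
  simp [Finsupp.mem_support_iff, indicatorOne_apply]

lemma indicatorOne_injective : Function.Injective indicatorOne := fun S T h => by
  rw [← support_indicatorOne S, h, support_indicatorOne]

lemma finsum_row (n : (ℕ × ℕ) →₀ ℕ) (m : ℕ) :
    ∑ᶠ j, (n (m, j) : ℤ) = ∑ p ∈ n.support with p.1 = m, (n p : ℤ) := by
  have hinj : Set.InjOn Prod.snd (n.support.filter (·.1 = m) : Set (ℕ × ℕ)) := by
    intro p hp q hq h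
    simp only [coe_filter, Set.mem_ofPred_eq] at hp hq
    exact Prod.ext (hp.2.trans hq.2.symm) h
  rw [finsum_eq_sum_of_support_subset (s := {p ∈ n.support | p.1 = m}.image Prod.snd),
    sum_image hinj]
  · refine sum_congr rfl fun p hp => ?_
    rw [← (mem_filter.1 hp).2]
  · intro j hj
    exact mem_image.2 ⟨(m, j), by simpa using hj, rfl⟩

lemma finsum_column (n : (ℕ × ℕ) →₀ ℕ) (m : ℕ) :
    ∑ᶠ i, (n (i, m) : ℤ) = ∑ p ∈ n.support with p.2 = m, (n p : ℤ) := by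
  have hinj : Set.InjOn Prod.fst (n.support.filter (·.2 = m) : Set (ℕ × ℕ)) := by
    intro p hp q hq h
    simp only [coe_filter, Set.mem_ofPred_eq] at hp hq
    exact Prod.ext h (hp.2.trans hq.2.symm)
  rw [finsum_eq_sum_of_support_subset (s := {p ∈ n.support | p.2 = m}.image Prod.fst),
    sum_image hinj]
  · refine sum_congr rfl fun p hp => ?_
    rw [← (mem_filter.1 hp).2]
  · intro i hi
    exact mem_image.2 ⟨(i, m), by simpa using hi, rfl⟩

lemma net_indicatorOne (S : Finset (ℕ × ℕ)) (m : ℕ) :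
    net (indicatorOne S) m = (#{p ∈ S | p.1 = m} : ℤ) - #{p ∈ S | p.2 = m} := by
  rw [net, finsum_row, finsum_column, support_indicatorOne]
  simp [indicatorOne_apply, inter_eq_left.2 (filter_subset _ _)]

lemma net_eq_zero_of_forall_ne (n : (ℕ × ℕ) →₀ ℕ) {m : ℕ}
    (h : ∀ p ∈ n.support, p.1 ≠ m ∧ p.2 ≠ m) : net n m = 0 := by
  rw [net, finsum_row, finsum_column, filter_false_of_mem fun p hp => (h p hp).1,
    filter_false_of_mem fun p hp => (h p hp).2, sum_empty, sub_zero]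

lemma net_zero_nonneg {n : (ℕ × ℕ) →₀ ℕ} (h : ∀ p ∈ n.support, p ∈ UT) : 0 ≤ net n 0 := by
  have hcol : ∀ p ∈ n.support, p.2 ≠ 0 := fun p hp => Nat.ne_zero_of_lt (h p hp)
  rw [net, finsum_column, filter_false_of_mem hcol, sum_empty, sub_zero]
  exact finsum_nonneg fun _ => Int.natCast_nonneg _

variable {B : Type} [CommRing B] {f : ℤ → B} {α : ℕ → ℤ} {L : ℕ}

lemma hasFiniteMulSupport_net (hf0 : f 0 = 1) (hα : ∀ m, L ≤ m → α m = 0)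
    (n : (ℕ × ℕ) →₀ ℕ) : Function.HasFiniteMulSupport fun m => f (α m + net n m) := by
  refine (range L ∪ n.support.image Prod.fst ∪ n.support.image Prod.snd).finite_toSet.subset
    fun m hm => ?_
  by_contra hmem
  simp only [coe_union, coe_range, coe_image, Set.mem_union, Set.mem_Iio, Set.mem_image,
    mem_coe, not_or, not_exists, not_and, not_lt] at hmem
  apply hm
  show f (α m + net n m) = 1
  rw [hα m hmem.1.1, net_eq_zero_of_forall_ne n fun p hp => ⟨hmem.1.2 p hp, hmem.2 p hp⟩,
    add_zero, hf0]

lemma rcoeff_eq_prod_support (D D' : Set (ℕ × ℕ)) (n : (ℕ × ℕ) →₀ ℕ) :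
    rcoeff D D' n = ∏ p ∈ n.support,
      (if p ∈ D then (if n p = 0 then 1 else 2 * (-1 : ℤ) ^ (n p))
      else if p ∈ D' then (if n p = 0 then 1 else if n p = 1 then -1 else 0)
      else (if n p = 0 then 1 else 0)) :=
  finprod_eq_prod_of_mulSupport_subset _ fun p hp => by
    by_contra hns
    rw [mem_coe, Finsupp.notMem_support_iff] at hns
    simp [hns] at hp

lemma mem_union_of_rcoeff_ne_zero {D D' : Set (ℕ × ℕ)} {n : (ℕ × ℕ) →₀ ℕ}
    (h : rcoeff D D' n ≠ 0) {p : ℕ × ℕ} (hp : p ∈ n.support) : p ∈ D ∪ D' := by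
  by_contra hpD
  rw [Set.mem_union, not_or] at hpD
  rw [rcoeff_eq_prod_support] at h
  exact h <| prod_eq_zero hp <| by
    rw [if_neg hpD.1, if_neg hpD.2, if_neg (Finsupp.mem_support_iff.1 hp)]

lemma eq_indicatorOne_of_rcoeff_ne_zero {n : (ℕ × ℕ) →₀ ℕ} (h : rcoeff ∅ UT n ≠ 0) :
    n = indicatorOne n.support := by
  ext p
  rw [indicatorOne_apply]
  split_ifs with hp
  · have hUT : p ∈ UT := by simpa using mem_union_of_rcoeff_ne_zero h hp
    rw [rcoeff_eq_prod_support] at h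
    by_contra hp1
    exact h <| prod_eq_zero hp <| by
      rw [if_neg (Set.notMem_empty p), if_pos hUT, if_neg (Finsupp.mem_support_iff.1 hp),
        if_neg hp1]
  · exact Finsupp.notMem_support_iff.1 hp

lemma rcoeff_indicatorOne {S : Finset (ℕ × ℕ)} (hS : ↑S ⊆ UT) :
    rcoeff ∅ UT (indicatorOne S) = (-1) ^ #S := by
  rw [rcoeff_eq_prod_support, support_indicatorOne, ← prod_const]
  refine prod_congr rfl fun p hp => ?_
  simp [indicatorOne_apply, hp, hS hp]

/-- The raising operators `R_{ij}` with `i < j` never lower the first entry, so every term of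
`RApply` carries a factor `f r` with `r ≥ α 0`. -/
lemma map_RApply_eq_zero {C : Type} [CommRing C] (φ : B →+* C) {D D' : Set (ℕ × ℕ)}
    (hD : D ∪ D' ⊆ UT) (hf0 : f 0 = 1) (hα : ∀ m, L ≤ m → α m = 0)
    (hφ : ∀ r, α 0 ≤ r → φ (f r) = 0) : φ (RApply D D' f α) = 0 := by
  rw [RApply]
  by_cases hfin : Function.HasFiniteSupport fun n => rcoeff D D' n • ∏ᶠ m, f (α m + net n m)
  · rw [finsum_eq_sum _ hfin, map_sum]
    refine sum_eq_zero fun n _ => ?_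
    by_cases hn : rcoeff D D' n = 0
    · rw [hn, zero_smul, map_zero]
    have hnet := net_zero_nonneg fun p hp => hD (mem_union_of_rcoeff_ne_zero hn hp)
    rw [map_zsmul, map_finprod φ (hasFiniteMulSupport_net hf0 hα n),
      finprod_eq_zero _ 0 (hφ _ (le_add_of_nonneg_right hnet))
        ((hasFiniteMulSupport_net hf0 hα n).subset fun m hm h => hm (by simp [h])), smul_zero]
  · rw [finsum_of_infinite_support hfin, map_zero]

def upperPairs (L : ℕ) : Finset (ℕ × ℕ) := {p ∈ range L ×ˢ range L | p.1 < p.2}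

lemma mem_upperPairs {L : ℕ} {p : ℕ × ℕ} : p ∈ upperPairs L ↔ p.1 < p.2 ∧ p.2 < L := by
  simp only [upperPairs, mem_filter, mem_product, mem_range]
  omega

/-- Entry `M := max_{p ∈ S} p.2` is lowered by some `R_p` and raised by none, so it becomes
negative once `M ≥ L`. -/
lemma finprod_net_indicatorOne_eq_zero (hf0 : f 0 = 1) (hneg : ∀ r < 0, f r = 0)
    (hα : ∀ m, L ≤ m → α m = 0) {S : Finset (ℕ × ℕ)} (hS : ↑S ⊆ UT) {p : ℕ × ℕ} (hp : p ∈ S)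
    (hL : L ≤ p.2) : ∏ᶠ m, f (α m + net (indicatorOne S) m) = 0 := by
  obtain ⟨q, hq, hmax⟩ := exists_max_image S Prod.snd ⟨p, hp⟩
  have hout : #{p ∈ S | p.1 = q.2} = 0 := card_eq_zero.2 <| filter_eq_empty_iff.2 fun p' hp' h =>
    absurd (hmax p' hp') (not_le.2 (h ▸ hS hp'))
  have hin : 0 < #{p ∈ S | p.2 = q.2} := card_pos.2 ⟨q, mem_filter.2 ⟨hq, rfl⟩⟩
  refine finprod_eq_zero _ q.2 (hneg _ ?_) (hasFiniteMulSupport_net hf0 hα _)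
  rw [hα _ (hL.trans (hmax p hp)), net_indicatorOne, hout]
  omega

lemma RApply_empty_UT_eq_sum (hf0 : f 0 = 1) (hneg : ∀ r < 0, f r = 0)
    (hα : ∀ m, L ≤ m → α m = 0) :
    RApply ∅ UT f α = ∑ S ∈ (upperPairs L).powerset,
      (-1 : ℤ) ^ #S • ∏ m ∈ range L, f (α m + net (indicatorOne S) m) := by
  rw [RApply, finsum_eq_sum_of_support_subset (s := (upperPairs L).powerset.image indicatorOne),
    sum_image indicatorOne_injective.injOn]
  · refine sum_congr rfl fun S hS => ?_
    have hS := mem_powerset.1 hS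
    rw [rcoeff_indicatorOne fun p hp => (mem_upperPairs.1 (hS hp)).1]
    congr 1
    refine finprod_eq_prod_of_mulSupport_subset _ fun m hm => ?_
    by_contra hmL
    rw [coe_range, Set.mem_Iio, not_lt] at hmL
    refine hm ?_
    show f (α m + net (indicatorOne S) m) = 1
    rw [hα m hmL, net_eq_zero_of_forall_ne _ fun p hp => ?_, add_zero, hf0]
    have := mem_upperPairs.1 (hS (support_indicatorOne S ▸ hp))
    omega
  · intro n hn
    have hrc : rcoeff ∅ UT n ≠ 0 := fun h => hn (by simp only [h, zero_smul])
    have hUT : ↑n.support ⊆ UT := fun p hp => by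
      simpa using mem_union_of_rcoeff_ne_zero hrc hp
    have hn_eq := eq_indicatorOne_of_rcoeff_ne_zero hrc
    refine mem_image.2 ⟨n.support, mem_powerset.2 fun p hp => ?_, hn_eq.symm⟩
    refine mem_upperPairs.2 ⟨hUT hp, not_le.1 fun hpL => hn ?_⟩
    show rcoeff ∅ UT n • ∏ᶠ m, f (α m + net n m) = 0
    rw [hn_eq, finprod_net_indicatorOne_eq_zero hf0 hneg hα hUT hp hpL, smul_zero]

end RaisingOperators

section JacobiTrudi

open MvPolynomial

lemma prod_X_eq_monomial {ι : Type} (s : Finset ι) (h : ι → ℕ) :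
    ∏ p ∈ s, (X (h p) : MvPolynomial ℕ ℤ) = monomial (∑ p ∈ s, Finsupp.single (h p) 1) 1 := by
  rw [monomial_sum_one]
  rfl

lemma prod_upperPairs_eq_sum_powerset (L : ℕ) :
    ∏ p ∈ upperPairs L, (X p.2 - X p.1 : MvPolynomial ℕ ℤ) =
      ∑ S ∈ (upperPairs L).powerset, (-1 : ℤ) ^ #S •
        monomial
          (∑ p ∈ S, Finsupp.single p.1 1 + ∑ p ∈ upperPairs L \ S, Finsupp.single p.2 1) 1 := by
  simp_rw [sub_eq_neg_add, prod_add, prod_neg, prod_X_eq_monomial, mul_assoc, monomial_mul,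
    one_mul, zsmul_eq_mul]
  push_cast
  rfl

lemma prod_upperPairs_eq_sum_perm (L : ℕ) :
    ∏ p ∈ upperPairs L, (X p.2 - X p.1 : MvPolynomial ℕ ℤ) =
      ∑ σ : Equiv.Perm (Fin L), (Equiv.Perm.sign σ : ℤ) •
        monomial (∑ i : Fin L, Finsupp.single (i : ℕ) (σ i : ℕ)) 1 := by
  have hvdm : ∏ p ∈ upperPairs L, (X p.2 - X p.1 : MvPolynomial ℕ ℤ) =
      (Matrix.vandermonde fun i : Fin L => (X (i : ℕ) : MvPolynomial ℕ ℤ)).det := by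
    rw [Matrix.det_vandermonde, upperPairs, prod_filter, prod_product, prod_range]
    refine prod_congr rfl fun i _ => ?_
    rw [prod_range, ← prod_filter]
    exact prod_congr (by ext j; simp) fun _ _ => rfl
  rw [hvdm, ← Matrix.det_transpose, Matrix.det_apply]
  refine sum_congr rfl fun σ _ => ?_
  simp_rw [Units.smul_def, Matrix.transpose_apply, Matrix.vandermonde_apply, X_pow_eq_monomial,
    ← monomial_sum_one]

lemma exponent_sub_eq_net {L : ℕ} {S : Finset (ℕ × ℕ)} (hS : S ⊆ upperPairs L) {m : ℕ}
    (hm : m < L) :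
    (((∑ p ∈ S, Finsupp.single p.1 1 + ∑ p ∈ upperPairs L \ S, Finsupp.single p.2 1 :
      ℕ →₀ ℕ) m : ℕ) : ℤ) - m = net (indicatorOne S) m := by
  have hcol : #{p ∈ upperPairs L | p.2 = m} = m := by
    have hmap : {p ∈ upperPairs L | p.2 = m} =
        (range m).map ⟨(·, m), fun _ _ h => (Prod.mk.inj h).1⟩ := by
      ext ⟨i, j⟩
      simp only [mem_filter, mem_upperPairs, mem_map, mem_range]
      constructor
      · rintro ⟨⟨hij, -⟩, rfl⟩
        exact ⟨i, hij, rfl⟩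
      · rintro ⟨i, hi, h⟩
        cases h
        exact ⟨⟨hi, hm⟩, rfl⟩
    rw [hmap, card_map, card_range]
  have hsplit : #{p ∈ upperPairs L \ S | p.2 = m} + #{p ∈ S | p.2 = m} = m := by
    rw [← card_union_of_disjoint (disjoint_filter_filter sdiff_disjoint), ← filter_union,
      sdiff_union_of_subset hS, hcol]
  simp only [Finsupp.add_apply, Finsupp.finsetSum_apply, Finsupp.single_apply, sum_boole,
    net_indicatorOne]
  push_cast
  omega

variable {B : Type} [CommRing B]

/-- Both sides are the image of the Vandermonde product `∏_{i<j<L} (X_j - X_i)` under the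
`ℤ`-linear map sending the monomial `X^e` to `∏_{m<L} f (α m + e m - m)`: expanding the product
gives the left side, the Vandermonde determinant gives the right side. -/
theorem sum_powerset_upperPairs_eq_det (f : ℤ → B) (α : ℕ → ℤ) (L : ℕ) :
    ∑ S ∈ (upperPairs L).powerset,
        (-1 : ℤ) ^ #S • ∏ m ∈ range L, f (α m + net (indicatorOne S) m) =
      (Matrix.of fun i j : Fin L => f (α i - i + j)).det := by
  let F : (ℕ →₀ ℕ) → B := fun e => ∏ m ∈ range L, f (α m + e m - m)
  let Φ : MvPolynomial ℕ ℤ →ₗ[ℤ] B :=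
    Finsupp.linearCombination ℤ F ∘ₗ (AddMonoidAlgebra.coeffLinearEquiv ℤ).toLinearMap
  have hΦ : ∀ e, Φ (monomial e 1) = F e := by simp [Φ, ← single_eq_monomial]
  have key := congrArg Φ
    ((prod_upperPairs_eq_sum_powerset L).symm.trans (prod_upperPairs_eq_sum_perm L))
  simp only [map_sum, map_zsmul, hΦ] at key
  rw [← Matrix.det_transpose, Matrix.det_apply]
  convert key using 2 with S hS σ
  · refine congrArg _ (prod_congr rfl fun m hm => ?_)
    rw [add_sub_assoc, exponent_sub_eq_net (mem_powerset.1 hS) (mem_range.1 hm)]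
  · rw [Units.smul_def]
    refine congrArg _ ?_
    simp only [F, prod_range, Matrix.transpose_apply, Matrix.of_apply, Finsupp.finsetSum_apply,
      Finsupp.single_apply, Fin.val_inj, sum_ite_eq', mem_univ, if_true]
    refine prod_congr rfl fun i _ => congrArg f ?_
    ring

theorem RApply_empty_UT_eq_det {f : ℤ → B} (hf0 : f 0 = 1) (hneg : ∀ r < 0, f r = 0)
    {α : ℕ → ℤ} {L : ℕ} (hα : ∀ m, L ≤ m → α m = 0) :
    RApply ∅ UT f α = (Matrix.of fun i j : Fin L => f (α i - i + j)).det := by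
  rw [RApply_empty_UT_eq_sum hf0 hneg hα, sum_powerset_upperPairs_eq_det]

end JacobiTrudi

section ConstantTerm

open MvPowerSeries

variable {k : ℕ} {σ : Type} {μ : ℕ →₀ ℕ}

lemma constantCoeff_RApply_thetaSer_eq_schurConjE (hμ : Antitone μ) :
    constantCoeff (RApply ∅ (UT \ ∅) (thetaSer k σ) fun i => μ i) = schurConjE k μ := by
  rw [Set.sdiff_empty, RApply_empty_UT_eq_det (thetaSer_zero k σ) (fun _ => thetaSer_of_neg)
    (L := plen μ) fun m hm => by simp [eq_zero_of_plen_le hμ hm], RingHom.map_det, schurConjE]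
  exact congrArg Matrix.det (Matrix.ext fun i j => constantCoeff_thetaSer k σ _)

lemma constantCoeff_RApply_thetaSer_eq_zero {D D' : Set (ℕ × ℕ)} (hD : D ∪ D' ⊆ UT)
    (hμ : Antitone μ) (h : k < μ 0) :
    constantCoeff (RApply D D' (thetaSer k σ) fun i => μ i) = 0 :=
  map_RApply_eq_zero _ hD (thetaSer_zero k σ) (L := plen μ)
    (fun m hm => by simp [eq_zero_of_plen_le hμ hm])
    fun r hr => by rw [constantCoeff_thetaSer, esy_of_lt (by omega)]

lemma constantCoeff_EtaHat_of_le (hμ : Antitone μ) (h : μ 0 ≤ k) :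
    constantCoeff (EtaHat k σ μ) = schurConjE k μ := by
  rw [EtaHat, ThetaHat, CsetP_eq_empty hμ h, map_mul,
    constantCoeff_RApply_thetaSer_eq_schurConjE hμ, cq, constantCoeff_C, lenk_eq_zero hμ h]
  simp

lemma constantCoeff_EtaTilde_of_eq (hμ : Antitone μ) (h : μ 0 = k) :
    constantCoeff (EtaTilde k σ μ) = schurConjE k μ := by
  have hlenk := lenk_eq_zero hμ h.le
  have hμ' := antitone_removeK (k := k) hμ
  have h' : removeK k μ 0 ≤ k := by
    rw [removeK_apply_of_lenk_eq_zero hlenk]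
    exact h ▸ hμ (Nat.zero_le 1)
  rw [EtaTilde, if_pos ⟨0, h⟩, ThetaT, TCset_eq_empty hμ' h', map_mul, map_mul,
    constantCoeff_RApply_thetaSer_eq_schurConjE hμ', cq, constantCoeff_C, constantCoeff_C,
    ← schurConjE_eq_esy_mul_removeK hμ h, hlenk]
  simp

lemma constantCoeff_EtaHat_of_lt (hμ : Antitone μ) (h : k < μ 0) :
    constantCoeff (EtaHat k σ μ) = 0 := by
  rw [EtaHat, ThetaHat, map_mul, constantCoeff_RApply_thetaSer_eq_zero
    (Set.union_subset (fun _ hp => hp.1) Set.sdiff_subset) hμ h, mul_zero]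

lemma constantCoeff_EtaTilde_of_lt (hμ : Antitone μ) (h : k < μ 0) :
    constantCoeff (EtaTilde k σ μ) = 0 := by
  rw [EtaTilde]
  split_ifs
  · have h' : k < removeK k μ 0 := by rwa [removeK_zero_of_lenk_pos (lenk_pos h)]
    rw [ThetaT, map_mul, map_mul, constantCoeff_RApply_thetaSer_eq_zero
      (Set.union_subset (fun _ hp => hp.1) Set.sdiff_subset) (antitone_removeK hμ) h', mul_zero,
      mul_zero]
  · exact map_zero _

end ConstantTerm

theorem statement5_general (k : ℕ) (lam : TypedKS k) :
    (k < lam.p 0 →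
      MvPowerSeries.coeff (R := MvPolynomial (Fin k) ℚ) 0 (Eta k ℕ lam) = 0) ∧
    (lam.p 0 = k → lam.t = 1 →
      MvPowerSeries.coeff (R := MvPolynomial (Fin k) ℚ) 0 (Eta k ℕ lam) = schurConjE k lam.p) ∧
    (lam.p 0 = k → lam.t = 2 →
      MvPowerSeries.coeff (R := MvPolynomial (Fin k) ℚ) 0 (Eta k ℕ lam) = 0) ∧
    (lam.p 0 < k →
      MvPowerSeries.coeff (R := MvPolynomial (Fin k) ℚ) 0 (Eta k ℕ lam) = schurConjE k lam.p) := by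
  have hanti : Antitone lam.p := fun i j hij => lam.mono i j hij
  simp only [MvPowerSeries.coeff_zero_eq_constantCoeff_apply, Eta]
  refine ⟨fun h => ?_, fun h ht => ?_, fun h ht => ?_, fun h => ?_⟩
  · split_ifs <;> simp [constantCoeff_EtaHat_of_lt hanti h, constantCoeff_EtaTilde_of_lt hanti h]
  · rw [if_neg (by omega), if_pos ht, map_mul, map_add, constantCoeff_EtaHat_of_le hanti h.le,
      constantCoeff_EtaTilde_of_eq hanti h, cq, MvPowerSeries.constantCoeff_C, ← two_mul,
      ← mul_assoc, ← map_ofNat MvPolynomial.C 2, ← map_mul]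
    norm_num
  · rw [if_neg (by omega), if_neg (by omega), map_mul, map_sub,
      constantCoeff_EtaHat_of_le hanti h.le, constantCoeff_EtaTilde_of_eq hanti h, sub_self,
      mul_zero]
  · have ht : lam.t = 0 := not_not.1 fun ht => by
      obtain ⟨i, hi⟩ := lam.t_pos.1 ht
      have := hanti i.zero_le
      omega
    rw [if_pos ht, constantCoeff_EtaHat_of_le hanti h.le]

/-- the constant term of `H_λ(x;y)` in the `x` variables:
`H_λ(0;y) = 0` if `λ₁ > k`, `s_{λ'}(y)` if `λ₁ = k` and `type(λ) = 1`, `0` if `λ₁ = k`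
and `type(λ) = 2`, and `s_{λ'}(y)` if `λ₁ < k`. -/
theorem statement5 (k : ℕ) (hk : 0 < k) (lam : TypedKS k) :
    (k < lam.p 0 →
      MvPowerSeries.coeff (R := MvPolynomial (Fin k) ℚ) 0 (Eta k ℕ lam) = 0) ∧
    (lam.p 0 = k → lam.t = 1 →
      MvPowerSeries.coeff (R := MvPolynomial (Fin k) ℚ) 0 (Eta k ℕ lam) = schurConjE k lam.p) ∧
    (lam.p 0 = k → lam.t = 2 →
      MvPowerSeries.coeff (R := MvPolynomial (Fin k) ℚ) 0 (Eta k ℕ lam) = 0) ∧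
    (lam.p 0 < k →
      MvPowerSeries.coeff (R := MvPolynomial (Fin k) ℚ) 0 (Eta k ℕ lam) = schurConjE k lam.p) :=
  statement5_general k lam

end EtaP
end
end
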